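/- arXiv:1912.01529 — 4 statements merged into one kernel-verified Lean document; each statement's English description precedes it below -/
import Mathlib

section
/- Let (W,S) be an irreducible, infinite Coxeter system of rank n, and let I, J ⊆ S with |I| = |J| = n−1. Then the standard parabolic subgroups W_I and W_J are conjugate in W if and only if I = J. -/
open List

namespace CoxPaper

/-- Irreducibility of a Coxeter matrix: connectedness of the Coxeter diagram, the graph
on `B` with an edge between distinct `i`, `j` whenever `M i j ≠ 2`. -/
def IsIrreducible {B : Type*} (M : CoxeterMatrix B) : Prop :=
  (SimpleGraph.fromRel (fun i j => M i j ≠ 2)).Connected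

variable {B : Type*} {W : Type*} [Group W] {M : CoxeterMatrix B}

/-- The standard parabolic subgroup `W_I` generated by the simple reflections indexed by `I`. -/
def stdParabolic (cs : CoxeterSystem M W) (I : Set B) : Subgroup W :=
  Subgroup.closure (cs.simple '' I)

/-- A parabolic subgroup: a conjugate of a standard parabolic subgroup. -/
def IsParabolic (cs : CoxeterSystem M W) (P : Subgroup W) : Prop :=
  ∃ (w : W) (I : Set B), P = (stdParabolic cs I).map (MulAut.conj w).toMonoidHom

/-- An element is essential if it lies in no proper parabolic subgroup. -/
def IsEssential (cs : CoxeterSystem M W) (w : W) : Prop :=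
  ∀ P : Subgroup W, IsParabolic cs P → P ≠ ⊤ → w ∉ P

/-- A standard Coxeter element: the product of all the simple reflections, each occurring
exactly once, in some order. -/
def IsStdCoxeterElement (cs : CoxeterSystem M W) (w : W) : Prop :=
  ∃ l : List B, l.Nodup ∧ (∀ i : B, i ∈ l) ∧ w = cs.wordProd l

/-- A Coxeter element: any conjugate of a standard Coxeter element. -/
def IsCoxeterElement (cs : CoxeterSystem M W) (w : W) : Prop :=
  ∃ (x c : W), IsStdCoxeterElement cs c ∧ w = x * c * x⁻¹

/-- Length of a shortest factorization of `w` as a product of elements of `Ts`. -/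
noncomputable def reflLengthOn (Ts : Set W) (w : W) : ℕ :=
  sInf {k | ∃ l : List W, l.length = k ∧ (∀ t ∈ l, t ∈ Ts) ∧ l.prod = w}

/-- The reflection length `ℓ_T(w)`. -/
noncomputable def reflLength (cs : CoxeterSystem M W) (w : W) : ℕ :=
  reflLengthOn {t | cs.IsReflection t} w

/-- A reduced reflection factorization of `w`. -/
def IsReducedReflFactorization (cs : CoxeterSystem M W) (w : W) (l : List W) : Prop :=
  (∀ t ∈ l, cs.IsReflection t) ∧ l.prod = w ∧ l.length = reflLength cs w

/-- The parabolic closure of a subset `X` of `W`: the intersection of all parabolic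
subgroups containing `X` (which is the smallest such parabolic subgroup). -/
noncomputable def parabolicClosure (cs : CoxeterSystem M W) (X : Set W) : Subgroup W :=
  sInf {P | IsParabolic cs P ∧ X ⊆ ↑P}

/-- An element `w` is straight if `ℓ(wᵐ) = |m| ℓ(w)` for all integers `m`. -/
def IsStraight (cs : CoxeterSystem M W) (w : W) : Prop :=
  ∀ m : ℤ, cs.length (w ^ m) = m.natAbs * cs.length w

/-- The standard geometric (Tits) representation of a Coxeter system on a real vector
space `V` with basis `(e_i)` and symmetric bilinear form `B(e_i, e_j) = -cos (π / m_{ij})`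
(interpreted as `-1` when `m_{ij} = ∞`, i.e. `M i j = 0`). -/
structure GeomRep (cs : CoxeterSystem M W) (V : Type*) [AddCommGroup V] [Module ℝ V] where
  /-- the simple roots, a basis of `V` -/
  e : Module.Basis B ℝ V
  /-- the bilinear form -/
  BF : V →ₗ[ℝ] V →ₗ[ℝ] ℝ
  /-- the action of `W` on `V` -/
  σ : W →* (V →ₗ[ℝ] V)
  hBF : ∀ i j, BF (e i) (e j) = if M i j = 0 then -1 else -Real.cos (Real.pi / (M i j : ℝ))
  hσ : ∀ i v, σ (cs.simple i) v = v - (2 * BF (e i) v) • e i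

namespace GeomRep

variable {V : Type*} [AddCommGroup V] [Module ℝ V] {cs : CoxeterSystem M W}

/-- Roots. -/
def IsRoot (ρ : GeomRep cs V) (α : V) : Prop := ∃ (w : W) (i : B), α = ρ.σ w (ρ.e i)

/-- Positive roots. -/
def IsPos (ρ : GeomRep cs V) (α : V) : Prop := ρ.IsRoot α ∧ ∀ i, 0 ≤ ρ.e.repr α i

/-- Negative roots. -/
def IsNeg (ρ : GeomRep cs V) (α : V) : Prop := ρ.IsRoot α ∧ ∀ i, ρ.e.repr α i ≤ 0

/-- The inversion set `Φ⁺(u)`: positive roots sent by `u` to negative roots. -/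
def invSet (ρ : GeomRep cs V) (u : W) : Set V := {α | ρ.IsPos α ∧ ρ.IsNeg (ρ.σ u α)}

end GeomRep

end CoxPaper

/-!
Everything happens in the Tits representation of `W` on `ℝ^S`, whose standard basis vectors
`e_s` are the simple roots. Its basic property is that every root `w e_i` is either
nonnegative or nonpositive; this reduces, by peeling off alternating suffixes, to an explicit
computation in the dihedral groups `⟨s_i, s_j⟩`, where the coefficients are `sin (k π / m_{ij})`.

Write `I = S ∖ {s}`, `J = S ∖ {t}` and suppose `w W_J w⁻¹ = W_I` with `s ≠ t`. The coordinate
`x_t` is invariant under `W_J`, so `x_t ∘ w⁻¹` vanishes at every `e_i` with `i ∈ I`, in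
particular at `e_t`. If `x_t (w⁻¹ e_s) ≥ 0`, then `x_t` and `x_t ∘ w⁻¹` both lie in the closed
dual fundamental chamber, and Tits' lemma gives `x_t ∘ w⁻¹ = x_t`, contradicting `x_t e_t = 1`.
If `x_t (w⁻¹ e_s) < 0`, then `w⁻¹` sends every positive root with nonzero `e_s`-coordinate to a
negative root, so there are at most `ℓ(w)` of them. Deodhar's argument, which propagates
finiteness along the edges of the connected Coxeter diagram, then shows that there are only
finitely many roots, so that `W` is finite.
-/

namespace Tits

open Real CoxeterSystem CoxPaper

section CoxeterMatrix

variable {B : Type*} {M : CoxeterMatrix B} {i j : B}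

/-- The Gram matrix `(-cos (π / m_{ij}))` of the Tits form; `M i j = 0` encodes `m_{ij} = ∞`. -/
noncomputable def cosMatrix (M : CoxeterMatrix B) : Matrix B B ℝ :=
  Matrix.of fun i j => if M i j = 0 then -1 else -cos (π / M i j)

lemma cosMatrix_self (i : B) : cosMatrix M i i = 1 := by
  simp [cosMatrix]

lemma cosMatrix_comm (i j : B) : cosMatrix M i j = cosMatrix M j i := by
  simp [cosMatrix, M.symmetric i j]

lemma cosMatrix_transpose : (cosMatrix M).transpose = cosMatrix M :=
  Matrix.ext fun i j => cosMatrix_comm j i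

lemma cosMatrix_of_ne_zero (h : M i j ≠ 0) : cosMatrix M i j = -cos (π / M i j) := by
  simp [cosMatrix, h]

lemma cosMatrix_of_eq_zero (h : M i j = 0) : cosMatrix M i j = -1 := by
  simp [cosMatrix, h]

lemma two_le_of_ne_of_ne_zero (hij : i ≠ j) (h : M i j ≠ 0) : 2 ≤ M i j := by
  have := M.off_diagonal i j hij
  omega

lemma cosMatrix_nonpos (hij : i ≠ j) : cosMatrix M i j ≤ 0 := by
  by_cases h : M i j = 0
  · simp [cosMatrix_of_eq_zero h]
  have hm : (2 : ℝ) ≤ M i j := by exact_mod_cast two_le_of_ne_of_ne_zero hij h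
  rw [cosMatrix_of_ne_zero h, neg_nonpos]
  have : 0 < π / M i j := by positivity
  refine cos_nonneg_of_mem_Icc ⟨by linarith [pi_pos], ?_⟩
  exact div_le_div_of_nonneg_left pi_pos.le two_pos hm

lemma cosMatrix_neg (hij : i ≠ j) (h2 : M i j ≠ 2) : cosMatrix M i j < 0 := by
  by_cases h : M i j = 0
  · simp [cosMatrix_of_eq_zero h]
  have hm : (3 : ℝ) ≤ M i j := by
    have := two_le_of_ne_of_ne_zero hij h
    exact_mod_cast (by omega : 3 ≤ M i j)
  rw [cosMatrix_of_ne_zero h, neg_lt_zero]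
  have : 0 < π / M i j := by positivity
  refine cos_pos_of_mem_Ioo ⟨by linarith [pi_pos], ?_⟩
  calc π / M i j ≤ π / 3 := div_le_div_of_nonneg_left pi_pos.le three_pos hm
    _ < π / 2 := by linarith [pi_pos]

lemma sin_pi_div_pos (hij : i ≠ j) (h : M i j ≠ 0) : 0 < sin (π / M i j) := by
  have hm : (2 : ℝ) ≤ M i j := by exact_mod_cast two_le_of_ne_of_ne_zero hij h
  apply sin_pos_of_pos_of_lt_pi (by positivity)
  rw [div_lt_iff₀ (by positivity)]
  nlinarith [pi_pos]

lemma cosMatrix_sq_lt_one (hij : i ≠ j) (h : M i j ≠ 0) : cosMatrix M i j ^ 2 < 1 := by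
  rw [cosMatrix_of_ne_zero h, neg_sq, ← sin_sq_add_cos_sq (π / M i j)]
  linarith [pow_pos (sin_pi_div_pos hij h) 2]

/-- The recursion satisfied by the coefficients of `(s_i s_j)ᵏ e_i` in `e_i, e_j`; it is solved
by `n ↦ sin (n π / m_{ij})`, or by `n ↦ n` when `m_{ij} = ∞`. -/
def IsDihedralSeq (M : CoxeterMatrix B) (i j : B) (g : ℕ → ℝ) : Prop :=
  ∀ n, g (n + 2) = -2 * cosMatrix M i j * g (n + 1) - g n

lemma isDihedralSeq_sin (h : M i j ≠ 0) :
    IsDihedralSeq M i j fun n => sin (n * (π / M i j)) := by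
  intro n
  rw [cosMatrix_of_ne_zero h]
  push_cast
  rw [show ((n : ℝ) + 2) * (π / M i j) = (n + 1) * (π / M i j) + π / M i j by ring,
    show (n : ℝ) * (π / M i j) = (n + 1) * (π / M i j) - π / M i j by ring, sin_add, sin_sub]
  ring

lemma isDihedralSeq_id (h : M i j = 0) : IsDihedralSeq M i j fun n => (n : ℝ) := by
  intro n
  rw [cosMatrix_of_eq_zero h]
  push_cast
  ring

lemma exists_isDihedralSeq_nonneg (hij : i ≠ j) {q : ℕ} (hq : M i j = 0 ∨ q < M i j) :
    ∃ g : ℕ → ℝ, IsDihedralSeq M i j g ∧ g 0 = 0 ∧ 0 < g 1 ∧ ∀ n ≤ q + 1, 0 ≤ g n := by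
  by_cases h : M i j = 0
  · exact ⟨_, isDihedralSeq_id h, Nat.cast_zero, by norm_num, fun n _ => n.cast_nonneg⟩
  refine ⟨_, isDihedralSeq_sin h, by simp, by simpa using sin_pi_div_pos hij h, fun n hn => ?_⟩
  have hm : (0 : ℝ) < M i j := by exact_mod_cast Nat.pos_of_ne_zero h
  have hnm : (n : ℝ) ≤ M i j := by exact_mod_cast hn.trans (hq.resolve_left h)
  apply sin_nonneg_of_nonneg_of_le_pi (by positivity)
  calc (n : ℝ) * (π / M i j) ≤ M i j * (π / M i j) := by gcongr
    _ = π := by field_simp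

end CoxeterMatrix

section AlternatingWord

variable {B : Type*} {M : CoxeterMatrix B} {i j : B}
variable {W : Type*} [Group W] (cs : CoxeterSystem M W)

lemma exists_alternatingWord_suffix {w : W} (hj : cs.IsRightDescent w j) :
    ∃ (u : W) (q : ℕ), 0 < q ∧ w = u * cs.wordProd (alternatingWord i j q) ∧
      cs.length w = cs.length u + q ∧ ¬ cs.IsRightDescent u i ∧ ¬ cs.IsRightDescent u j := by
  induction h : cs.length w using Nat.strong_induction_on generalizing w i j with
  | _ n ih =>
  have hw : w = w * cs.simple j * cs.simple j := (cs.simple_mul_simple_cancel_right j).symm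
  have hlen : cs.length (w * cs.simple j) + 1 = n := h ▸ cs.isRightDescent_iff.mp hj
  by_cases hi : cs.IsRightDescent (w * cs.simple j) i
  · obtain ⟨u, q, hq, hwu, hl, hui, huj⟩ := ih _ (by omega) hi rfl
    refine ⟨u, q + 1, q.succ_pos, ?_, by omega, huj, hui⟩
    rw [alternatingWord_succ, wordProd_concat, ← mul_assoc, ← hwu, ← hw]
  · refine ⟨w * cs.simple j, 1, one_pos, by rwa [alternatingWord, alternatingWord,
      concat_nil, wordProd_singleton], by omega, hi, ?_⟩
    rw [cs.not_isRightDescent_iff, simple_mul_simple_cancel_right]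
    omega

lemma alternatingWord_suffix_lt {w u : W} {q : ℕ}
    (hw : w = u * cs.wordProd (alternatingWord i j q)) (hl : cs.length w = cs.length u + q)
    (hi : ¬ cs.IsRightDescent w i) : M i j = 0 ∨ q < M i j := by
  subst hw
  refine or_iff_not_imp_left.2 fun hm => lt_of_le_of_ne ?_ fun hqm => hi ?_
  · have hred : cs.IsReduced (alternatingWord i j q) := by
      have := cs.length_mul_le u (cs.wordProd (alternatingWord i j q))
      have := cs.length_wordProd_le (alternatingWord i j q)
      rw [length_alternatingWord] at this
      rw [CoxeterSystem.IsReduced, length_alternatingWord]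
      omega
    by_contra! hgt
    exact cs.not_isReduced_alternatingWord i j hm hgt hred
  · -- by the braid relation `w` also ends with `s_i`
    obtain ⟨p, rfl⟩ : ∃ p, q = p + 1 := ⟨q - 1, by omega⟩
    have hbraid : cs.wordProd (alternatingWord i j (p + 1))
        = cs.wordProd (alternatingWord i j p) * cs.simple i := by
      rw [hqm, ← braidWord, wordProd_braidWord_eq, braidWord, M.symmetric, ← hqm,
        alternatingWord_succ, wordProd_concat]
    have := cs.length_mul_le u (cs.wordProd (alternatingWord i j p))
    have := cs.length_wordProd_le (alternatingWord i j p)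
    rw [length_alternatingWord] at this
    rw [IsRightDescent, hl, hbraid, ← mul_assoc, simple_mul_simple_cancel_right]
    omega

end AlternatingWord

variable {B : Type*} [Fintype B] [DecidableEq B] {M : CoxeterMatrix B} {i j : B}

lemma exists_eq_compl_singleton [Nonempty B] {I : Finset B} (h : I.card = Fintype.card B - 1) :
    ∃ s, I = {s}ᶜ := by
  have : Iᶜ.card = 1 := by
    rw [Finset.card_compl, h]
    have := Fintype.card_pos (α := B)
    omega
  obtain ⟨s, hs⟩ := Finset.card_eq_one.mp this
  exact ⟨s, by rw [← hs, compl_compl]⟩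

lemma dual_apply_eq_sum (f : Module.Dual ℝ (B → ℝ)) (v : B → ℝ) :
    f v = ∑ l, v l * f (Pi.single l 1) := by
  rw [f.pi_apply_eq_sum_univ v]
  refine Finset.sum_congr rfl fun l _ => ?_
  rw [smul_eq_mul]
  congr 3
  ext j
  simp [Pi.single_apply, eq_comm]

lemma dual_nonneg {f : Module.Dual ℝ (B → ℝ)} (hf : ∀ l, 0 ≤ f (Pi.single l 1)) {v : B → ℝ}
    (hv : 0 ≤ v) : 0 ≤ f v := by
  rw [dual_apply_eq_sum]
  exact Finset.sum_nonneg fun l _ => mul_nonneg (hv l) (hf l)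

/-- The Tits bilinear form on `B → ℝ`, whose standard basis vectors are the simple roots. -/
noncomputable def form (M : CoxeterMatrix B) : LinearMap.BilinForm ℝ (B → ℝ) :=
  Matrix.toLinearMap₂' ℝ (cosMatrix M)

@[simp]
lemma form_single_single (i j : B) : form M (Pi.single i 1) (Pi.single j 1) = cosMatrix M i j := by
  simp [form, Matrix.toLinearMap₂'_apply', single_dotProduct]

lemma form_comm (v u : B → ℝ) : form M v u = form M u v := by
  simp only [form, Matrix.toLinearMap₂'_apply', Matrix.dotProduct_mulVec, dotProduct_comm _ u,
    ← Matrix.mulVec_transpose, cosMatrix_transpose]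

lemma form_single_apply (i : B) (v : B → ℝ) :
    form M (Pi.single i 1) v = ∑ j, cosMatrix M i j * v j := by
  rw [form, Matrix.toLinearMap₂'_apply', single_dotProduct, one_mul]
  rfl

noncomputable def simpleRefl (M : CoxeterMatrix B) (i : B) : Module.End ℝ (B → ℝ) :=
  Module.preReflection (Pi.single i 1) (2 • form M (Pi.single i 1))

lemma simpleRefl_apply (i : B) (v : B → ℝ) :
    simpleRefl M i v = v - (2 * form M (Pi.single i 1) v) • Pi.single i 1 := by
  simp [simpleRefl, Module.preReflection_apply]

lemma simpleRefl_single_self (i : B) : simpleRefl M i (Pi.single i 1) = -Pi.single i 1 := by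
  rw [simpleRefl_apply, form_single_single, cosMatrix_self]; module

lemma simpleRefl_single (i j : B) :
    simpleRefl M i (Pi.single j 1) = Pi.single j 1 - (2 * cosMatrix M i j) • Pi.single i 1 := by
  rw [simpleRefl_apply, form_single_single]

lemma simpleRefl_apply_of_ne {i l : B} (h : l ≠ i) (v : B → ℝ) : simpleRefl M i v l = v l := by
  simp [simpleRefl_apply, h]

lemma simpleRefl_apply_of_form_eq_zero {v : B → ℝ} (h : form M (Pi.single i 1) v = 0) :
    simpleRefl M i v = v := by
  simp [simpleRefl_apply, h]

lemma simpleRefl_involutive (i : B) : Function.Involutive (simpleRefl M i) :=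
  Module.involutive_preReflection (by simp [cosMatrix_self])

lemma simpleRefl_mul_self (i : B) : simpleRefl M i * simpleRefl M i = 1 :=
  LinearMap.ext (simpleRefl_involutive i)

lemma form_simpleRefl (i : B) (v u : B → ℝ) :
    form M (simpleRefl M i v) (simpleRefl M i u) = form M v u := by
  simp only [simpleRefl_apply, map_sub, map_smul, LinearMap.sub_apply, LinearMap.smul_apply,
    form_single_single, cosMatrix_self, smul_eq_mul, form_comm v (Pi.single i 1)]
  ring

lemma simpleRefl_right_apply_pair (a b : ℝ) :
    simpleRefl M j (a • Pi.single i 1 + b • Pi.single j 1)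
      = a • Pi.single i 1 + (-2 * cosMatrix M i j * a - b) • Pi.single j 1 := by
  simp only [map_add, map_smul, simpleRefl_single_self, simpleRefl_single, cosMatrix_comm j i]
  module

lemma simpleRefl_left_apply_pair (a b : ℝ) :
    simpleRefl M i (a • Pi.single i 1 + b • Pi.single j 1)
      = (-2 * cosMatrix M i j * b - a) • Pi.single i 1 + b • Pi.single j 1 := by
  rw [add_comm, simpleRefl_right_apply_pair, cosMatrix_comm, add_comm]

lemma mul_pow_apply_of_isDihedralSeq {g : ℕ → ℝ} (hg : IsDihedralSeq M i j g) (k : ℕ) :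
    ((simpleRefl M i * simpleRefl M j) ^ k) (g 1 • Pi.single i 1 + g 0 • Pi.single j 1)
      = g (2 * k + 1) • Pi.single i 1 + g (2 * k) • Pi.single j 1 := by
  induction k with
  | zero => simp
  | succ k ih =>
    rw [pow_succ', Module.End.mul_apply, ih, Module.End.mul_apply, simpleRefl_right_apply_pair,
      simpleRefl_left_apply_pair, ← hg, ← hg]
    ring_nf

lemma mul_pow_single_left (hij : i ≠ j) :
    ((simpleRefl M i * simpleRefl M j) ^ M i j) (Pi.single i 1) = Pi.single i 1 := by
  by_cases h : M i j = 0
  · simp [h]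
  have hs := sin_pi_div_pos hij h
  have hpi : (M i j : ℝ) * (π / M i j) = π := by field_simp
  have key := mul_pow_apply_of_isDihedralSeq (isDihedralSeq_sin h) (M i j)
  simp only [Nat.cast_zero, zero_mul, sin_zero, zero_smul, add_zero, Nat.cast_one, one_mul,
    map_smul] at key
  push_cast at key
  rw [show (2 * (M i j : ℝ) + 1) * (π / M i j) = π / M i j + 2 * π by
      rw [add_mul, mul_assoc, hpi]; ring,
    show 2 * (M i j : ℝ) * (π / M i j) = 2 * π by rw [mul_assoc, hpi],
    sin_add_two_pi, sin_two_pi, zero_smul, add_zero] at key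
  exact smul_right_injective _ hs.ne' key

lemma mul_pow_single_right (hij : i ≠ j) :
    ((simpleRefl M i * simpleRefl M j) ^ M i j) (Pi.single j 1) = Pi.single j 1 := by
  have hconj : simpleRefl M j * (simpleRefl M j * simpleRefl M i) ^ M i j
      = (simpleRefl M i * simpleRefl M j) ^ M i j * simpleRefl M j := by
    refine SemiconjBy.pow_right ?_ _
    simp only [SemiconjBy, ← mul_assoc, simpleRefl_mul_self, one_mul]
    rw [mul_assoc, simpleRefl_mul_self, mul_one]
  have hji := mul_pow_single_left (M := M) hij.symm
  rw [M.symmetric j i] at hji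
  have := congrArg (· (Pi.single j 1)) hconj
  simp only [Module.End.mul_apply, hji, simpleRefl_single_self, map_neg, neg_inj] at this
  exact this.symm

lemma mul_pow_coxeter_eq_one (hij : i ≠ j) : (simpleRefl M i * simpleRefl M j) ^ M i j = 1 := by
  by_cases h : M i j = 0
  · simp [h]
  set K := cosMatrix M i j
  have hK : 1 - K ^ 2 ≠ 0 := (sub_pos.2 (cosMatrix_sq_lt_one hij h)).ne'
  refine LinearMap.ext fun v => ?_
  -- split `v` into a part in the plane of `e_i, e_j` and a part `q` orthogonal to it
  set x := form M (Pi.single i 1) v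
  set y := form M (Pi.single j 1) v
  obtain ⟨a, b, hxab, hyab⟩ : ∃ a b : ℝ, x - a - b * K = 0 ∧ y - a * K - b = 0 :=
    ⟨(x - K * y) / (1 - K ^ 2), (y - K * x) / (1 - K ^ 2), by field_simp; ring,
      by field_simp; ring⟩
  set q := v - a • Pi.single i 1 - b • Pi.single j 1
  have hqi : simpleRefl M i q = q :=
    simpleRefl_apply_of_form_eq_zero (by simpa [q, cosMatrix_self] using hxab)
  have hqj : simpleRefl M j q = q :=
    simpleRefl_apply_of_form_eq_zero (by simpa [q, cosMatrix_self, cosMatrix_comm j i] using hyab)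
  have hfix : ((simpleRefl M i * simpleRefl M j) ^ M i j) q = q := by
    rw [Module.End.pow_apply]
    exact Function.iterate_fixed (by simp [hqi, hqj]) _
  have hv : v = a • Pi.single i 1 + b • Pi.single j 1 + q := by module
  rw [hv, map_add, map_add, map_smul, map_smul, mul_pow_single_left hij,
    mul_pow_single_right hij, hfix, Module.End.one_apply]

lemma isLiftable_simpleRefl : M.IsLiftable (simpleRefl M) := by
  intro i j
  by_cases hij : i = j
  · rw [hij, M.diagonal, pow_one, simpleRefl_mul_self]
  · exact mul_pow_coxeter_eq_one hij

variable {W : Type*} [Group W] (cs : CoxeterSystem M W)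

noncomputable def tits : W →* Module.End ℝ (B → ℝ) :=
  cs.lift ⟨simpleRefl M, isLiftable_simpleRefl⟩

@[simp]
lemma tits_simple (i : B) : tits cs (cs.simple i) = simpleRefl M i :=
  cs.lift_apply_simple isLiftable_simpleRefl i

@[simp]
lemma tits_inv_apply (w : W) (v : B → ℝ) : tits cs w⁻¹ (tits cs w v) = v := by
  rw [← Module.End.mul_apply, ← map_mul, inv_mul_cancel, map_one, Module.End.one_apply]

@[simp]
lemma tits_apply_inv (w : W) (v : B → ℝ) : tits cs w (tits cs w⁻¹ v) = v := by
  rw [← Module.End.mul_apply, ← map_mul, mul_inv_cancel, map_one, Module.End.one_apply]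

lemma form_tits (w : W) (v u : B → ℝ) : form M (tits cs w v) (tits cs w u) = form M v u := by
  induction w using cs.simple_induction generalizing v u with
  | simple i => simp [form_simpleRefl]
  | one => simp
  | mul w₁ w₂ h₁ h₂ => simp [h₁, h₂]

lemma tits_alternatingWord_single_left (hij : i ≠ j) {q : ℕ} (hq : M i j = 0 ∨ q < M i j) :
    ∃ a b : ℝ, 0 ≤ a ∧ 0 ≤ b ∧ tits cs (cs.wordProd (alternatingWord i j q))
      (Pi.single i 1) = a • Pi.single i 1 + b • Pi.single j 1 := by
  obtain ⟨g, hg, hg0, hg1, hgq⟩ := exists_isDihedralSeq_nonneg hij hq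
  have hpow (k : ℕ) := mul_pow_apply_of_isDihedralSeq hg k
  simp only [hg0, zero_smul, add_zero] at hpow
  have heven (k : ℕ) : tits cs (cs.wordProd (alternatingWord i j (2 * k)))
      = (simpleRefl M i * simpleRefl M j) ^ k := by
    simp [cs.prod_alternatingWord_eq_mul_pow]
  obtain ⟨a, b, ha, hb, hab⟩ : ∃ a b : ℝ, 0 ≤ a ∧ 0 ≤ b ∧ tits cs
      (cs.wordProd (alternatingWord i j q)) (g 1 • Pi.single i 1)
        = a • Pi.single i 1 + b • Pi.single j 1 := by
    obtain ⟨k, rfl | rfl⟩ := Nat.even_or_odd' q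
    · rw [heven, hpow]
      exact ⟨_, _, hgq _ (by omega), hgq _ (by omega), rfl⟩
    · rw [alternatingWord_succ', if_pos (even_two_mul k), cs.wordProd_cons,
        map_mul, Module.End.mul_apply, heven, hpow, tits_simple, simpleRefl_right_apply_pair,
        ← hg]
      exact ⟨_, _, hgq _ (by omega), hgq _ (by omega), rfl⟩
  refine ⟨(g 1)⁻¹ * a, (g 1)⁻¹ * b, by positivity, by positivity, ?_⟩
  rw [map_smul] at hab
  rw [mul_smul, mul_smul, ← smul_add, ← hab, inv_smul_smul₀ hg1.ne']

theorem tits_single_nonneg {w : W} {i : B} (h : ¬ cs.IsRightDescent w i) :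
    0 ≤ tits cs w (Pi.single i 1) := by
  induction hn : cs.length w using Nat.strong_induction_on generalizing w i with
  | _ n ih =>
  rcases eq_or_ne w 1 with rfl | hw1
  · simp [Pi.single_nonneg]
  obtain ⟨j, hj⟩ := cs.exists_rightDescent_of_ne_one hw1
  have hij : i ≠ j := fun hij => h (hij ▸ hj)
  -- peel the longest alternating suffix in `s_i, s_j` off `w`
  obtain ⟨u, q, hq, hwu, hl, hui, huj⟩ := exists_alternatingWord_suffix cs (i := i) hj
  obtain ⟨a, b, ha, hb, hab⟩ :=
    tits_alternatingWord_single_left cs hij (alternatingWord_suffix_lt cs hwu hl h)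
  have hu : cs.length u < n := by omega
  rw [hwu, map_mul, Module.End.mul_apply, hab, map_add, map_smul, map_smul]
  exact add_nonneg (smul_nonneg ha (ih _ hu hui rfl)) (smul_nonneg hb (ih _ hu huj rfl))

theorem tits_single_nonpos {w : W} {i : B} (h : cs.IsRightDescent w i) :
    tits cs w (Pi.single i 1) ≤ 0 := by
  have := tits_single_nonneg cs (cs.isRightDescent_iff_not_isRightDescent_mul.mp h)
  rwa [map_mul, Module.End.mul_apply, tits_simple, simpleRefl_single_self, map_neg,
    neg_nonneg] at this

def IsRoot (α : B → ℝ) : Prop := ∃ (w : W) (i : B), α = tits cs w (Pi.single i 1)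

def posRoots : Set (B → ℝ) := {α | IsRoot cs α ∧ 0 ≤ α}

def inversionSet (w : W) : Set (B → ℝ) := {α | α ∈ posRoots cs ∧ tits cs w α ≤ 0}

def rootsOutside (D : Finset B) : Set (B → ℝ) := {β | β ∈ posRoots cs ∧ ∃ l ∉ D, β l ≠ 0}

section Roots

variable {cs}

lemma isRoot_single (i : B) : IsRoot cs (Pi.single i 1) := ⟨1, i, by simp⟩

lemma IsRoot.map_tits {α : B → ℝ} (h : IsRoot cs α) (w : W) : IsRoot cs (tits cs w α) := by
  obtain ⟨u, i, rfl⟩ := h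
  exact ⟨w * u, i, by simp⟩

lemma IsRoot.map_simpleRefl {α : B → ℝ} (h : IsRoot cs α) (i : B) :
    IsRoot cs (simpleRefl M i α) := by
  simpa using h.map_tits (cs.simple i)

lemma IsRoot.form_self {α : B → ℝ} (h : IsRoot cs α) : form M α α = 1 := by
  obtain ⟨w, i, rfl⟩ := h
  rw [form_tits, form_single_single, cosMatrix_self]

lemma IsRoot.ne_zero {α : B → ℝ} (h : IsRoot cs α) : α ≠ 0 := by
  rintro rfl
  simpa using h.form_self

lemma IsRoot.not_nonpos {α : B → ℝ} (h : IsRoot cs α) (hα : 0 ≤ α) : ¬ α ≤ 0 :=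
  fun h' => h.ne_zero (le_antisymm h' hα)

lemma IsRoot.nonneg_or_nonpos {α : B → ℝ} (h : IsRoot cs α) : 0 ≤ α ∨ α ≤ 0 := by
  obtain ⟨w, i, rfl⟩ := h
  by_cases hd : cs.IsRightDescent w i
  · exact .inr (tits_single_nonpos cs hd)
  · exact .inl (tits_single_nonneg cs hd)

lemma IsRoot.reflect {α β : B → ℝ} (hα : IsRoot cs α) (hβ : IsRoot cs β) :
    IsRoot cs (β - (2 * form M α β) • α) := by
  obtain ⟨u, i, rfl⟩ := hα
  convert hβ.map_tits (u * cs.simple i * u⁻¹) using 1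
  have : form M (tits cs u (Pi.single i 1)) β = form M (Pi.single i 1) (tits cs u⁻¹ β) := by
    rw [← form_tits cs u⁻¹, tits_inv_apply]
  simp [simpleRefl_apply, this]

lemma IsRoot.eq_of_smul_eq_smul {α β : B → ℝ} (hα : IsRoot cs α) (hβ : IsRoot cs β) {a b : ℝ}
    (ha : 0 < a) (hb : 0 < b) (h : a • α = b • β) : α = β := by
  have hab : a ^ 2 = b ^ 2 := by
    simpa [hα.form_self, hβ.form_self, sq] using congrArg (fun v => form M v v) h
  rw [(pow_left_inj₀ ha.le hb.le two_ne_zero).mp hab] at h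
  exact smul_right_injective _ hb.ne' h

lemma IsRoot.eq_single {α : B → ℝ} (h : IsRoot cs α) (hα : 0 ≤ α) {i : B}
    (hsupp : ∀ l ≠ i, α l = 0) : α = Pi.single i 1 := by
  have hαi : α = α i • Pi.single i 1 := by
    ext l
    rcases eq_or_ne l i with rfl | hl <;> simp [*]
  have := h.form_self
  rw [hαi] at this
  simp only [map_smul, LinearMap.smul_apply, form_single_single, cosMatrix_self, smul_eq_mul,
    mul_one] at this
  have : α i = 1 := by nlinarith [show 0 ≤ α i from hα i]
  rwa [this, one_smul] at hαi

lemma IsRoot.simpleRefl_nonneg {α : B → ℝ} (h : IsRoot cs α) (hα : 0 ≤ α) {i : B}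
    (hne : α ≠ Pi.single i 1) : 0 ≤ simpleRefl M i α := by
  refine (h.map_simpleRefl i).nonneg_or_nonpos.resolve_right fun hneg => hne (h.eq_single hα ?_)
  intro l hl
  have := hneg l
  rw [simpleRefl_apply_of_ne hl] at this
  exact le_antisymm this (hα l)

lemma inversionSet_subset_posRoots (w : W) : inversionSet cs w ⊆ posRoots cs := fun _ h => h.1

lemma inversionSet_one : inversionSet cs 1 = ∅ :=
  Set.eq_empty_of_forall_notMem fun _ ⟨⟨hα, hpos⟩, hneg⟩ =>
    hα.not_nonpos hpos (by simpa using hneg)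

lemma inversionSet_mul_simple {w : W} {i : B} (h : ¬ cs.IsRightDescent w i) :
    inversionSet cs (w * cs.simple i)
      = insert (Pi.single i 1) (simpleRefl M i '' inversionSet cs w) := by
  have hwi := tits_single_nonneg cs h
  have htits (α : B → ℝ) : tits cs (w * cs.simple i) α = tits cs w (simpleRefl M i α) := by simp
  ext α
  simp only [inversionSet, posRoots, Set.mem_insert_iff, Set.mem_image, Set.mem_ofPred_eq, htits]
  constructor
  · rintro ⟨⟨hα, hpos⟩, hneg⟩
    refine or_iff_not_imp_left.2 fun hne => ⟨simpleRefl M i α, ⟨⟨hα.map_simpleRefl i,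
      hα.simpleRefl_nonneg hpos hne⟩, hneg⟩, simpleRefl_involutive i α⟩
  · rintro (rfl | ⟨β, ⟨⟨hβ, hpos⟩, hneg⟩, rfl⟩)
    · refine ⟨⟨isRoot_single i, Pi.single_nonneg.2 zero_le_one⟩, ?_⟩
      rwa [simpleRefl_single_self, map_neg, neg_nonpos]
    · have hne : β ≠ Pi.single i 1 := by
        rintro rfl
        exact ((isRoot_single i).map_tits w).not_nonpos hwi hneg
      exact ⟨⟨hβ.map_simpleRefl i, hβ.simpleRefl_nonneg hpos hne⟩, by
        rwa [simpleRefl_involutive i β]⟩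

lemma encard_inversionSet (w : W) : (inversionSet cs w).encard = cs.length w := by
  induction hn : cs.length w using Nat.strong_induction_on generalizing w with
  | _ n ih =>
  rcases eq_or_ne w 1 with rfl | hw1
  · simp [← hn, inversionSet_one]
  obtain ⟨j, hj⟩ := cs.exists_rightDescent_of_ne_one hw1
  have hl := cs.isRightDescent_iff.mp hj
  have hnd : ¬ cs.IsRightDescent (w * cs.simple j) j :=
    cs.isRightDescent_iff_not_isRightDescent_mul.mp hj
  have hnotMem : Pi.single j 1 ∉ simpleRefl M j '' inversionSet cs (w * cs.simple j) := by
    rintro ⟨β, ⟨⟨-, hpos⟩, -⟩, hβ⟩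
    have : (0 : ℝ) ≤ β j := hpos j
    rw [← simpleRefl_involutive j β, hβ, simpleRefl_single_self] at this
    norm_num at this
  rw [← simple_mul_simple_cancel_right cs (w := w) j, inversionSet_mul_simple hnd,
    Set.encard_insert_of_notMem hnotMem,
    (simpleRefl_involutive j).injective.injOn.encard_image, ih _ (by omega) _ rfl]
  norm_cast
  omega

theorem finite_of_posRoots_finite (h : (posRoots cs).Finite) : Finite W := by
  have hlen (w : W) : cs.length w ≤ h.toFinset.card := by
    have := Set.encard_le_encard (inversionSet_subset_posRoots (cs := cs) w)
    rw [encard_inversionSet, h.encard_eq_coe_toFinset_card] at this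
    exact_mod_cast this
  refine Set.finite_univ_iff.mp (((List.finite_length_le B h.toFinset.card).image
    cs.wordProd).subset fun w _ => ?_)
  obtain ⟨ω, hω, rfl⟩ := cs.exists_isReduced w
  exact ⟨ω, by simpa [← hω.eq] using hlen (cs.wordProd ω), rfl⟩

lemma rootsOutside_empty : rootsOutside cs ∅ = posRoots cs := by
  ext β
  simp only [rootsOutside, Finset.notMem_empty, not_false_eq_true, true_and, Set.mem_ofPred_eq]
  exact and_iff_left_of_imp fun hβ => Function.ne_iff.mp hβ.1.ne_zero

lemma form_single_neg {β : B → ℝ} (hβ : 0 ≤ β) {D : Finset B} (hsupp : ∀ l ∉ D, β l = 0)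
    {l p : B} (hl : l ∈ D) (hp : p ∉ D) (hβl : β l ≠ 0) (hlp : M l p ≠ 2) :
    form M (Pi.single p 1) β < 0 := by
  have hpl : p ≠ l := fun h => hp (h ▸ hl)
  rw [form_single_apply]
  refine lt_of_lt_of_eq (Finset.sum_lt_sum (g := fun _ => 0) (fun j _ => ?_)
    ⟨l, Finset.mem_univ l, ?_⟩) Finset.sum_const_zero
  · by_cases hj : j ∈ D
    · exact mul_nonpos_of_nonpos_of_nonneg (cosMatrix_nonpos fun h => hp (h ▸ hj)) (hβ j)
    · simp [hsupp j hj]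
  · exact mul_neg_of_neg_of_pos (cosMatrix_neg hpl (M.symmetric l p ▸ hlp))
      (lt_of_le_of_ne (hβ l) (Ne.symm hβl))

/-- Reflecting `e_p` in such roots embeds them into `rootsOutside cs D`. -/
lemma finite_setOf_form_neg {D : Finset B} (h : (rootsOutside cs D).Finite) {p : B} (hp : p ∉ D) :
    {β | β ∈ posRoots cs ∧ (∀ l ∉ D, β l = 0) ∧ form M β (Pi.single p 1) < 0}.Finite := by
  set f : (B → ℝ) → B → ℝ := fun β => Pi.single p 1 - (2 * form M β (Pi.single p 1)) • β
  refine Set.Finite.of_finite_image (f := f) (h.subset ?_) fun β hβ γ hγ hf => ?_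
  · rintro _ ⟨β, ⟨⟨hβ, -⟩, hsupp, -⟩, rfl⟩
    have hfp : f β p = 1 := by simp [f, hsupp p hp]
    have hroot := hβ.reflect (isRoot_single p)
    refine ⟨⟨hroot, hroot.nonneg_or_nonpos.resolve_right fun hneg => ?_⟩, p, hp, by simp [hfp]⟩
    have : f β p ≤ 0 := hneg p
    linarith
  · refine hβ.1.1.eq_of_smul_eq_smul hγ.1.1 (a := -(2 * form M β (Pi.single p 1)))
      (b := -(2 * form M γ (Pi.single p 1))) (by linarith [hβ.2.2]) (by linarith [hγ.2.2]) ?_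
    simpa [f, neg_smul] using hf

open Classical in
/-- The vertices of `D` with no Coxeter-diagram edge leaving `D`. -/
noncomputable def diagramInterior (M : CoxeterMatrix B) (D : Finset B) : Finset B :=
  D.filter fun x => ∀ p ∈ Dᶜ, M x p = 2

lemma mem_diagramInterior {D : Finset B} {x : B} :
    x ∈ diagramInterior M D ↔ x ∈ D ∧ ∀ p ∉ D, M x p = 2 := by
  simp [diagramInterior]

lemma diagramInterior_subset (D : Finset B) : diagramInterior M D ⊆ D :=
  fun _ hx => (mem_diagramInterior.mp hx).1

lemma finite_rootsOutside_diagramInterior {D : Finset B} (h : (rootsOutside cs D).Finite) :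
    (rootsOutside cs (diagramInterior M D)).Finite := by
  refine (h.union ((Dᶜ : Finset B).finite_toSet.biUnion fun p hp =>
    finite_setOf_form_neg h (by simpa using hp))).subset ?_
  rintro β ⟨hβ, l, hl, hβl⟩
  by_cases hout : ∃ l ∉ D, β l ≠ 0
  · exact .inl ⟨hβ, hout⟩
  push Not at hout
  have hlD : l ∈ D := by_contra fun h => hβl (hout l h)
  obtain ⟨p, hp, hlp⟩ : ∃ p ∉ D, M l p ≠ 2 := by simpa [mem_diagramInterior, hlD] using hl
  refine .inr (Set.mem_biUnion (by simpa using hp) ⟨hβ, hout, ?_⟩)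
  rw [form_comm]
  exact form_single_neg hβ.2 hout hlD hp hβl hlp

/-- Deodhar's argument: finiteness passes from `D` to the strictly smaller `diagramInterior M D`
until `D` is empty. -/
theorem finite_posRoots_of_finite_rootsOutside (hirr : IsIrreducible M) {D : Finset B}
    (hD : D ≠ Finset.univ) (h : (rootsOutside cs D).Finite) : (posRoots cs).Finite := by
  induction hn : D.card using Nat.strong_induction_on generalizing D with
  | _ n ih =>
  obtain rfl | ⟨d, hd⟩ := D.eq_empty_or_nonempty
  · rwa [rootsOutside_empty] at h
  obtain ⟨p, hp⟩ : ∃ p, p ∉ D := by simpa [Finset.eq_univ_iff_forall] using hD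
  -- a Coxeter-graph edge leaving `D`
  obtain ⟨⟨⟨x, y⟩, hxy⟩, -, hx, hy⟩ :=
    (hirr.preconnected d p).some.exists_boundary_dart (D : Set B) hd hp
  have hxy' : M x y ≠ 2 := by
    obtain ⟨-, h2 | h2⟩ := SimpleGraph.fromRel_adj _ _ _ |>.mp hxy
    exacts [h2, M.symmetric x y ▸ h2]
  have hsub : diagramInterior M D ⊂ D := by
    refine Finset.ssubset_iff_subset_ne.2 ⟨diagramInterior_subset D, fun he => hxy' ?_⟩
    rw [Finset.mem_coe, ← he, mem_diagramInterior] at hx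
    exact hx.2 y (by simpa using hy)
  exact ih _ (hn ▸ Finset.card_lt_card hsub) (fun he => hD (Finset.univ_subset_iff.mp
    (he ▸ hsub.subset))) (finite_rootsOutside_diagramInterior h) rfl

end Roots

/-- Tits' lemma on the fundamental chamber, in dual form. -/
theorem comp_tits_eq_of_nonneg {w : W} {f : Module.Dual ℝ (B → ℝ)}
    (hf : ∀ i, 0 ≤ f (Pi.single i 1)) (hfw : ∀ i, 0 ≤ f (tits cs w (Pi.single i 1))) :
    f ∘ₗ tits cs w = f := by
  induction hn : cs.length w using Nat.strong_induction_on generalizing w with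
  | _ n ih =>
  rcases eq_or_ne w 1 with rfl | hw1
  · ext; simp
  obtain ⟨i, hi⟩ := cs.exists_leftDescent_of_ne_one hw1
  have hneg := tits_single_nonpos cs (cs.isRightDescent_inv_iff.mpr hi)
  have hfi : f (Pi.single i 1) = 0 := by
    have := dual_nonneg (f := f ∘ₗ tits cs w) hfw (neg_nonneg.mpr hneg)
    simp only [LinearMap.comp_apply, map_neg, tits_apply_inv] at this
    exact le_antisymm (neg_nonneg.mp this) (hf i)
  have hfs (v : B → ℝ) : f (simpleRefl M i v) = f v := by simp [simpleRefl_apply, hfi]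
  have hsw (v : B → ℝ) : tits cs (cs.simple i * w) v = simpleRefl M i (tits cs w v) := by simp
  have hlen : cs.length (cs.simple i * w) < n := by
    have := cs.isLeftDescent_iff.mp hi
    omega
  have := ih _ hlen (w := cs.simple i * w) (fun j => by rw [hsw, hfs]; exact hfw j) rfl
  refine LinearMap.ext fun v => ?_
  simpa [hsw, hfs] using LinearMap.congr_fun this v

lemma tits_apply_of_mem_stdParabolic {J : Set B} {t : B} (ht : t ∉ J) {u : W}
    (hu : u ∈ stdParabolic cs J) (v : B → ℝ) : tits cs u v t = v t := by
  induction hu using Subgroup.closure_induction generalizing v with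
  | mem _ h =>
    obtain ⟨j, hj, rfl⟩ := h
    rw [tits_simple]
    exact simpleRefl_apply_of_ne (by rintro rfl; exact ht hj) v
  | one => simp
  | mul _ _ _ _ h₁ h₂ => simp [h₁, h₂]
  | inv u _ h => simpa using (h (tits cs u⁻¹ v)).symm

lemma tits_inv_single_apply_eq_zero {I J : Set B} {w : W}
    (hw : (stdParabolic cs J).map (MulAut.conj w).toMonoidHom = stdParabolic cs I)
    {t : B} (ht : t ∉ J) {i : B} (hi : i ∈ I) : tits cs w⁻¹ (Pi.single i 1) t = 0 := by
  have hsi : cs.simple i ∈ stdParabolic cs I := Subgroup.subset_closure ⟨i, hi, rfl⟩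
  obtain ⟨u, hu, hui⟩ := Subgroup.mem_map.mp (hw ▸ hsi)
  have hconj : w⁻¹ * cs.simple i = u * w⁻¹ := by
    rw [← hui]
    simp [mul_assoc]
  have := congrArg (fun g => tits cs g (Pi.single i 1) t) hconj
  simp only [map_mul, Module.End.mul_apply, tits_simple, simpleRefl_single_self, map_neg,
    Pi.neg_apply, tits_apply_of_mem_stdParabolic cs ht hu] at this
  linarith

theorem eq_of_map_conj_stdParabolic_compl_singleton (hirr : IsIrreducible M) [Infinite W]
    {s t : B} {w : W} (hw : (stdParabolic cs ↑({t}ᶜ : Finset B)).map (MulAut.conj w).toMonoidHom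
      = stdParabolic cs ↑({s}ᶜ : Finset B)) : s = t := by
  by_contra hst
  have hzero (i : B) (hi : i ≠ s) : tits cs w⁻¹ (Pi.single i 1) t = 0 :=
    tits_inv_single_apply_eq_zero cs hw (by simp) (by simpa using hi)
  rcases le_or_gt 0 (tits cs w⁻¹ (Pi.single s 1) t) with hs | hs
  · -- `w⁻¹` would fix the coordinate functional at `t`, which is `1` on `e_t`
    have hfix := comp_tits_eq_of_nonneg cs (w := w⁻¹) (f := LinearMap.proj t)
      (fun i => (Pi.single_nonneg.2 zero_le_one : (0 : B → ℝ) ≤ Pi.single i 1) t) fun i => by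
        rcases eq_or_ne i s with rfl | hi
        exacts [hs, (hzero i hi).ge]
    simpa [hzero t (Ne.symm hst)] using LinearMap.congr_fun hfix (Pi.single t 1)
  · -- every positive root with a nonzero coordinate at `s` is inverted by `w⁻¹`
    have hsub : rootsOutside cs {s}ᶜ ⊆ inversionSet cs w⁻¹ := by
      rintro β ⟨hβ, l, hl, hβl⟩
      obtain rfl : l = s := by simpa using hl
      refine ⟨hβ, (hβ.1.map_tits w⁻¹).nonneg_or_nonpos.resolve_left fun hpos => ?_⟩
      have hβt : tits cs w⁻¹ β t = β l * tits cs w⁻¹ (Pi.single l 1) t := by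
        have := dual_apply_eq_sum (LinearMap.proj (R := ℝ) t ∘ₗ tits cs w⁻¹) β
        rwa [Finset.sum_eq_single l (fun i _ hi => by simp [hzero i hi]) (by simp)] at this
      have hβl' : 0 < β l := lt_of_le_of_ne (hβ.2 l) (Ne.symm hβl)
      have : 0 ≤ tits cs w⁻¹ β t := hpos t
      nlinarith
    have hfin := (Set.finite_of_encard_eq_coe (encard_inversionSet w⁻¹)).subset hsub
    have := finite_of_posRoots_finite (finite_posRoots_of_finite_rootsOutside hirr
      (by simp [Finset.eq_univ_iff_forall]) hfin)
    exact not_finite W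

end Tits

open CoxPaper in
/-- In an irreducible infinite Coxeter system of rank `n`, two standard parabolic
subgroups of rank `n - 1` are conjugate iff they are equal. -/
theorem stmt_5 {B W : Type*} [Fintype B] [Group W] {M : CoxeterMatrix B}
    (cs : CoxeterSystem M W) (hirr : IsIrreducible M) (hinf : Infinite W)
    (I J : Finset B) (hI : I.card = Fintype.card B - 1) (hJ : J.card = Fintype.card B - 1) :
    (∃ w : W, (stdParabolic cs ↑J).map (MulAut.conj w).toMonoidHom = stdParabolic cs ↑I)
      ↔ I = J := by
  classical
  refine ⟨fun ⟨w, hw⟩ => ?_, fun h => ⟨1, by subst h; ext; simp⟩⟩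
  rcases _root_.isEmpty_or_nonempty B with hB | hB
  · exact Subsingleton.elim I J
  obtain ⟨s, rfl⟩ := Tits.exists_eq_compl_singleton hI
  obtain ⟨t, rfl⟩ := Tits.exists_eq_compl_singleton hJ
  rw [Tits.eq_of_map_conj_stdParabolic_compl_singleton cs hirr hw]
end

section
/- Let (W,S) be a Coxeter system, and suppose W_I = wW_Jw⁻¹ for subsets I, J ⊆ S and some w ∈ W. Then |I| = |J|, and there exists w_0 ∈ wW_J such that w_0 maps the simple roots Δ_J bijectively onto Δ_I and I = w_0 J w_0⁻¹. -/
open List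

/-! Take `w₀ ∈ w W_J` of minimal length. Minimality means that `w₀` has no right descent in `J`
and `w₀⁻¹` none in `I`, so `w₀ Δ_J` and `w₀⁻¹ Δ_I` consist of positive roots (Tits' argument:
`ℓ(w s_i) > ℓ(w)` forces `w e_i ≥ 0`, by reduction to dihedral subgroups, whose action on
`ℝe_i ⊕ ℝe_{i'}` has the Chebyshev values `U_k(cos (π/m))` as coefficients).
For `j ∈ J` the reflection `w₀ s_j w₀⁻¹ ∈ W_I` negates `β = w₀ e_j`, so `β` is a nonnegative
combination of `Δ_I`; applying `w₀⁻¹` writes `e_j` as a nonnegative combination of the nonnegative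
vectors `w₀⁻¹ e_i`, which forces `β = e_i` for some `i ∈ I`. By symmetry `w₀ Δ_J = Δ_I`, and
faithfulness of the representation turns `w₀ e_j = e_i` into `w₀ s_j w₀⁻¹ = s_i`. -/

open CoxPaper CoxeterSystem List Polynomial.Chebyshev

-- `m = 0` encodes `m = ∞`, with `cos (π / ∞) = 1`
noncomputable def coxeterCos (m : ℕ) : ℝ := if m = 0 then 1 else Real.cos (Real.pi / m)

lemma chebyshevU_eval_coxeterCos_nonneg {m : ℕ} (hm : m ≠ 1) {n : ℤ} (hn : -1 ≤ n)
    (hnm : m = 0 ∨ n < m) : 0 ≤ (U ℝ n).eval (coxeterCos m) := by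
  rcases eq_or_ne m 0 with rfl | hm0
  · rw [coxeterCos, if_pos rfl, U_eval_one]
    exact_mod_cast (by omega : (0 : ℤ) ≤ n + 1)
  have hm2 : (2 : ℝ) ≤ m := by exact_mod_cast (by omega : 2 ≤ m)
  have hnm' : (n : ℝ) + 1 ≤ m := by exact_mod_cast (by omega : n + 1 ≤ (m : ℤ))
  have hsin : 0 < Real.sin (Real.pi / m) := by
    apply Real.sin_pos_of_pos_of_lt_pi (by positivity)
    rw [div_lt_iff₀ (by positivity)]
    nlinarith [Real.pi_pos]
  refine nonneg_of_mul_nonneg_left ?_ hsin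
  rw [coxeterCos, if_neg hm0, U_real_cos]
  apply Real.sin_nonneg_of_nonneg_of_le_pi
  · have : (0 : ℝ) ≤ n + 1 := by exact_mod_cast (by omega : (0 : ℤ) ≤ n + 1)
    positivity
  · rw [mul_div_assoc', div_le_iff₀ (by positivity)]
    nlinarith [Real.pi_pos]

theorem Module.Basis.exists_eq_smul_of_sum_smul_eq {ι κ R M : Type*} [Ring R] [LinearOrder R]
    [IsStrictOrderedRing R] [AddCommGroup M] [Module R M] (b : Module.Basis ι R M)
    {s : Finset κ} {c : κ → R} {x : κ → M} (hc : ∀ k ∈ s, 0 ≤ c k)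
    (hx : ∀ k ∈ s, 0 ≤ b.repr (x k)) {j : ι} (h : ∑ k ∈ s, c k • x k = b j) :
    ∃ k ∈ s, ∃ d : R, 0 < d ∧ x k = d • b j := by
  classical
  have hcoord : ∀ l, ∑ k ∈ s, c k * b.repr (x k) l = Finsupp.single j 1 l := by
    intro l
    simpa [map_sum, Finsupp.finsetSum_apply] using congrArg (fun v => b.repr v l) h
  have hterm : ∀ l, ∀ k ∈ s, 0 ≤ c k * b.repr (x k) l :=
    fun l k hk => mul_nonneg (hc k hk) (hx k hk l)
  obtain ⟨k, hk, hkj⟩ := Finset.exists_ne_zero_of_sum_ne_zero (s := s)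
    (f := fun k => c k * b.repr (x k) j) (by simp [hcoord j])
  refine ⟨k, hk, b.repr (x k) j, (hx k hk j).lt_of_ne' (right_ne_zero_of_mul hkj),
    b.repr.injective (Finsupp.ext fun l => ?_)⟩
  rcases eq_or_ne l j with rfl | hl
  · simp
  · have := (Finset.sum_eq_zero_iff_of_nonneg (hterm l)).mp
      (by simp [hcoord l, hl.symm]) k hk
    simp [(mul_eq_zero.mp this).resolve_left (left_ne_zero_of_mul hkj), hl.symm]

namespace CoxeterSystem

variable {B W : Type*} [Group W] {M : CoxeterMatrix B} (cs : CoxeterSystem M W)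

theorem exists_eq_mul_alternatingWord {w : W} {i : B} (i' : B) (hwi : ¬cs.IsRightDescent w i) :
    ∃ (u : W) (r : ℕ), w = u * cs.wordProd (alternatingWord i i' r) ∧
      cs.length u + r = cs.length w ∧ ¬cs.IsRightDescent u i ∧ ¬cs.IsRightDescent u i' := by
  induction hn : cs.length w using Nat.strong_induction_on generalizing w i i' with
  | _ n ih =>
    by_cases hwi' : cs.IsRightDescent w i'
    · have hlen := cs.isRightDescent_iff.mp hwi'
      have hwi'' : ¬cs.IsRightDescent (w * cs.simple i') i' := by
        rw [cs.not_isRightDescent_iff, cs.simple_mul_simple_cancel_right, ← hlen]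
      obtain ⟨u, r, hw, hur, hui', hui⟩ := ih _ (by omega) i hwi'' rfl
      refine ⟨u, r + 1, ?_, by omega, hui, hui'⟩
      rw [alternatingWord_succ, wordProd_concat, ← mul_assoc, ← hw,
        cs.simple_mul_simple_cancel_right]
    · exact ⟨w, 0, by simp [alternatingWord], by simpa using hn, hwi, hwi'⟩

theorem lt_of_not_isRightDescent_mul_alternatingWord {u : W} {i i' : B} {r : ℕ}
    (hM : M i i' ≠ 0)
    (hlen : cs.length u + r = cs.length (u * cs.wordProd (alternatingWord i i' r)))
    (hdesc : ¬cs.IsRightDescent (u * cs.wordProd (alternatingWord i i' r)) i) : r < M i i' := by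
  have hle : ∀ k, cs.length (u * cs.wordProd (alternatingWord i i' k)) ≤ cs.length u + k := by
    intro k
    have := cs.length_wordProd_le (alternatingWord i i' k)
    have := cs.length_mul_le u (cs.wordProd (alternatingWord i i' k))
    simp only [length_alternatingWord] at *
    omega
  by_contra! hr
  rcases hr.eq_or_lt with hr | hr
  · obtain ⟨m, hm⟩ : ∃ m, M i i' = m + 1 := Nat.exists_eq_succ_of_ne_zero hM
    -- the braid relation rewrites the alternating word of length `M i i'` to end in `i`
    have hbraid : cs.wordProd (alternatingWord i i' r) =
        cs.wordProd (alternatingWord i i' m) * cs.simple i := by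
      have := cs.wordProd_braidWord_eq i i'
      rw [braidWord, braidWord, M.symmetric i' i, hm, alternatingWord_succ,
        alternatingWord_succ] at this
      rw [← hr, hm, alternatingWord_succ, this, wordProd_concat]
    apply hdesc
    rw [IsRightDescent, hbraid, ← mul_assoc, cs.simple_mul_simple_cancel_right, mul_assoc,
      ← hbraid]
    have := hle m
    omega
  · have hred := cs.not_isReduced_alternatingWord i i' hM hr
    have hlt : cs.length (cs.wordProd (alternatingWord i i' r)) < r := by
      have := cs.length_wordProd_le (alternatingWord i i' r)
      rw [IsReduced, length_alternatingWord] at hred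
      simp only [length_alternatingWord] at this
      omega
    have := cs.length_mul_le u (cs.wordProd (alternatingWord i i' r))
    omega

end CoxeterSystem

lemma CoxPaper.simple_mem_stdParabolic {B W : Type*} [Group W] {M : CoxeterMatrix B}
    {cs : CoxeterSystem M W} {I : Set B} {i : B} (hi : i ∈ I) : cs.simple i ∈ stdParabolic cs I :=
  Subgroup.subset_closure ⟨i, hi, rfl⟩

namespace CoxPaper.GeomRep

variable {B W : Type*} [Group W] {M : CoxeterMatrix B} {cs : CoxeterSystem M W}
  {V : Type*} [AddCommGroup V] [Module ℝ V] (ρ : GeomRep cs V)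

lemma BF_e_e (i j : B) : ρ.BF (ρ.e i) (ρ.e j) = -coxeterCos (M i j) := by
  rw [ρ.hBF, coxeterCos]; split_ifs <;> simp

lemma BF_e_self (i : B) : ρ.BF (ρ.e i) (ρ.e i) = 1 := by
  simp [BF_e_e, coxeterCos]

lemma BF_comm (x y : V) : ρ.BF x y = ρ.BF y x := by
  have : ρ.BF = ρ.BF.flip :=
    ρ.e.ext fun i => ρ.e.ext fun j => by simp only [LinearMap.flip_apply, ρ.hBF, M.symmetric i j]
  exact LinearMap.congr_fun₂ this x y

@[simp]
lemma σ_mul_apply (w w' : W) (v : V) : ρ.σ (w * w') v = ρ.σ w (ρ.σ w' v) := by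
  rw [map_mul, Module.End.mul_apply]

@[simp]
lemma σ_inv_apply_σ (w : W) (v : V) : ρ.σ w⁻¹ (ρ.σ w v) = v := by
  rw [← σ_mul_apply, inv_mul_cancel, map_one, Module.End.one_apply]

@[simp]
lemma σ_apply_σ_inv (w : W) (v : V) : ρ.σ w (ρ.σ w⁻¹ v) = v := by
  simp

lemma σ_simple_e_self (i : B) : ρ.σ (cs.simple i) (ρ.e i) = -ρ.e i := by
  rw [ρ.hσ, BF_e_self]
  module

lemma BF_σ_σ (w : W) (x y : V) : ρ.BF (ρ.σ w x) (ρ.σ w y) = ρ.BF x y := by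
  induction w using cs.simple_induction generalizing x y with
  | simple i =>
    simp only [ρ.hσ, map_sub, map_smul, LinearMap.sub_apply, LinearMap.smul_apply, smul_eq_mul,
      BF_e_self, ρ.BF_comm x (ρ.e i)]
    ring
  | one => simp
  | mul w w' hw hw' => simp [hw, hw']

lemma σ_simple_apply_pair_left (i i' : B) (p q : ℝ) :
    ρ.σ (cs.simple i) (p • ρ.e i + q • ρ.e i') =
      (2 * coxeterCos (M i i') * q - p) • ρ.e i + q • ρ.e i' := by
  simp only [ρ.hσ, map_add, map_smul, smul_eq_mul, BF_e_self, BF_e_e]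
  module

lemma σ_simple_apply_pair_right (i i' : B) (p q : ℝ) :
    ρ.σ (cs.simple i') (p • ρ.e i + q • ρ.e i') =
      p • ρ.e i + (2 * coxeterCos (M i i') * p - q) • ρ.e i' := by
  simp only [ρ.hσ, map_add, map_smul, smul_eq_mul, BF_e_self, BF_e_e, M.symmetric i' i]
  module

lemma σ_alternatingWord_e (i i' : B) (k : ℕ) :
    ρ.σ (cs.wordProd (alternatingWord i i' k)) (ρ.e i) =
      (U ℝ (if Even k then k else k - 1)).eval (coxeterCos (M i i')) • ρ.e i +
      (U ℝ (if Even k then k - 1 else k)).eval (coxeterCos (M i i')) • ρ.e i' := by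
  induction k with
  | zero => simp [alternatingWord]
  | succ k ih =>
    rw [alternatingWord_succ', wordProd_cons, σ_mul_apply, ih]
    by_cases hk : Even k
    · have hk1 : ¬Even (k + 1) := by simpa [Nat.even_add_one] using hk
      simp only [if_pos hk, if_neg hk1, σ_simple_apply_pair_right]
      simp [U_add_one]
    · have hk1 : Even (k + 1) := by simpa [Nat.even_add_one] using hk
      simp only [if_pos hk1, if_neg hk, σ_simple_apply_pair_left]
      simp [U_add_one]

theorem repr_σ_e_nonneg {w : W} {i : B} (hwi : ¬cs.IsRightDescent w i) :
    0 ≤ ρ.e.repr (ρ.σ w (ρ.e i)) := by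
  induction hn : cs.length w using Nat.strong_induction_on generalizing w i with
  | _ n ih =>
    rcases eq_or_ne w 1 with rfl | hw
    · simp [Finsupp.single_nonneg]
    obtain ⟨i', hwi'⟩ := cs.exists_rightDescent_of_ne_one hw
    have hii' : i ≠ i' := by rintro rfl; exact hwi hwi'
    obtain ⟨u, r, rfl, hlen, hui, hui'⟩ := cs.exists_eq_mul_alternatingWord i' hwi
    have hr : r ≠ 0 := by rintro rfl; simp_all [alternatingWord]
    have hM : M i i' ≠ 1 := M.off_diagonal i i' hii'
    have hrM : M i i' = 0 ∨ (r : ℤ) < M i i' := by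
      rcases eq_or_ne (M i i') 0 with h | h
      · exact .inl h
      · exact .inr (by exact_mod_cast cs.lt_of_not_isRightDescent_mul_alternatingWord h hlen hwi)
    have hU : ∀ n : ℤ, (n = r ∨ n = r - 1) → 0 ≤ (U ℝ n).eval (coxeterCos (M i i')) := by
      rintro n (rfl | rfl) <;> exact chebyshevU_eval_coxeterCos_nonneg hM (by omega) (by omega)
    rw [σ_mul_apply, σ_alternatingWord_e, map_add, map_smul, map_smul, map_add, map_smul, map_smul]
    exact add_nonneg (smul_nonneg (hU _ (by split_ifs <;> simp)) (ih _ (by omega) hui rfl))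
      (smul_nonneg (hU _ (by split_ifs <;> simp)) (ih _ (by omega) hui' rfl))

theorem repr_σ_e_nonpos {w : W} {i : B} (hwi : cs.IsRightDescent w i) :
    ρ.e.repr (ρ.σ w (ρ.e i)) ≤ 0 := by
  have hwsi : ¬cs.IsRightDescent (w * cs.simple i) i := by
    rwa [← cs.isRightDescent_iff_not_isRightDescent_mul]
  have := ρ.repr_σ_e_nonneg hwsi
  rw [σ_mul_apply, σ_simple_e_self, map_neg, map_neg] at this
  exact neg_nonneg.mp this

theorem σ_injective : Function.Injective ρ.σ := by
  refine (injective_iff_map_eq_one ρ.σ).mpr fun w hw => ?_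
  by_contra hw1
  obtain ⟨i, hwi⟩ := cs.exists_rightDescent_of_ne_one hw1
  have := ρ.repr_σ_e_nonpos hwi i
  norm_num [hw] at this

theorem σ_sub_mem_span_of_mem_stdParabolic {I : Set B} {x : W} (hx : x ∈ stdParabolic cs I)
    (v : V) : ρ.σ x v - v ∈ Submodule.span ℝ (ρ.e '' I) := by
  have hsimple : ∀ y ∈ cs.simple '' I, ∀ v, ρ.σ y v - v ∈ Submodule.span ℝ (ρ.e '' I) := by
    rintro _ ⟨j, hj, rfl⟩ v
    rw [ρ.hσ, sub_sub_cancel_left]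
    exact neg_mem (Submodule.smul_mem _ _ (Submodule.subset_span ⟨j, hj, rfl⟩))
  induction hx using Subgroup.closure_induction'' generalizing v with
  | mem y hy => exact hsimple y hy v
  | inv_mem y hy =>
    obtain ⟨j, hj, rfl⟩ := hy
    simpa using hsimple _ ⟨j, hj, rfl⟩ v
  | one => simp
  | mul y z _ _ hy hz =>
    rw [σ_mul_apply, ← sub_add_sub_cancel _ (ρ.σ z v)]
    exact add_mem (hy _) (hz _)

theorem σ_e_mem_image_e {w : W} {I J : Finset B}
    (hJ : ∀ j ∈ J, 0 ≤ ρ.e.repr (ρ.σ w (ρ.e j)))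
    (hI : ∀ i ∈ I, 0 ≤ ρ.e.repr (ρ.σ w⁻¹ (ρ.e i)))
    (hconj : ∀ j ∈ J, w * cs.simple j * w⁻¹ ∈ stdParabolic cs I) {j : B} (hj : j ∈ J) :
    ρ.σ w (ρ.e j) ∈ ρ.e '' I := by
  set β := ρ.σ w (ρ.e j)
  -- the reflection `w s_j w⁻¹ ∈ W_I` negates `β`, so `β` lies in the span of `Δ_I`
  have hβ : β ∈ Submodule.span ℝ (ρ.e '' I) := by
    have := ρ.σ_sub_mem_span_of_mem_stdParabolic (hconj j hj) β
    have hneg : ρ.σ (w * cs.simple j * w⁻¹) β - β = (-2 : ℝ) • β := by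
      simp only [β, σ_mul_apply, σ_inv_apply_σ, σ_simple_e_self, map_neg]
      module
    rw [hneg] at this
    exact (Submodule.smul_mem_iff _ (by norm_num)).mp this
  have hsum : ∑ i ∈ I, ρ.e.repr β i • ρ.σ w⁻¹ (ρ.e i) = ρ.e j := by
    have hβI : ∑ i ∈ I, ρ.e.repr β i • ρ.e i = β := by
      conv_rhs => rw [← ρ.e.linearCombination_repr β, Finsupp.linearCombination_apply]
      exact (Finsupp.sum_of_support_subset _ (Finset.coe_subset.mp (ρ.e.mem_span_image.mp hβ))
        (fun i a => a • ρ.e i) fun _ _ => zero_smul ℝ _).symm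
    simp only [← map_smul, ← map_sum, hβI, β, σ_inv_apply_σ]
  obtain ⟨i, hi, d, hd, hid⟩ :=
    ρ.e.exists_eq_smul_of_sum_smul_eq (fun k _ => hJ j hj k) hI hsum
  have hd1 : d = 1 := by
    have := ρ.BF_σ_σ w⁻¹ (ρ.e i) (ρ.e i)
    simp only [hid, map_smul, LinearMap.smul_apply, smul_eq_mul, BF_e_self] at this
    nlinarith
  exact ⟨i, hi, by rw [← σ_apply_σ_inv ρ w (ρ.e i), hid, hd1, one_smul]⟩

theorem conj_simple_eq_of_σ_e_eq {w : W} {i j : B} (h : ρ.σ w (ρ.e j) = ρ.e i) :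
    w * cs.simple j * w⁻¹ = cs.simple i := by
  refine ρ.σ_injective (LinearMap.ext fun v => ?_)
  have hB : ρ.BF (ρ.e j) (ρ.σ w⁻¹ v) = ρ.BF (ρ.e i) v := by
    rw [← h, ← ρ.BF_σ_σ w, σ_apply_σ_inv]
  simp [ρ.hσ, hB, h]

theorem image_σ_e_eq_of_minimal {w : W} {I J : Finset B}
    (hconj : ∀ x, x ∈ stdParabolic cs I ↔ w⁻¹ * x * w ∈ stdParabolic cs J)
    (hmin : ∀ y ∈ stdParabolic cs J, cs.length w ≤ cs.length (w * y)) :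
    ρ.σ w '' (ρ.e '' J) = ρ.e '' I := by
  have hJpos : ∀ j ∈ J, 0 ≤ ρ.e.repr (ρ.σ w (ρ.e j)) := fun j hj =>
    ρ.repr_σ_e_nonneg (not_lt.mpr (hmin _ (simple_mem_stdParabolic hj)))
  have hIpos : ∀ i ∈ I, 0 ≤ ρ.e.repr (ρ.σ w⁻¹ (ρ.e i)) := by
    intro i hi
    refine ρ.repr_σ_e_nonneg (cs.isRightDescent_inv_iff.not.mpr (not_lt.mpr ?_))
    simpa [mul_assoc] using hmin _ ((hconj _).mp (simple_mem_stdParabolic hi))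
  have hJI : ∀ j ∈ J, w * cs.simple j * w⁻¹ ∈ stdParabolic cs I := fun j hj =>
    (hconj _).mpr (by simpa [mul_assoc] using simple_mem_stdParabolic hj)
  have hIJ : ∀ i ∈ I, w⁻¹ * cs.simple i * w⁻¹⁻¹ ∈ stdParabolic cs J := fun i hi => by
    simpa using (hconj _).mp (simple_mem_stdParabolic hi)
  ext v
  constructor
  · rintro ⟨_, ⟨j, hj, rfl⟩, rfl⟩
    exact ρ.σ_e_mem_image_e hJpos hIpos hJI hj
  · rintro ⟨i, hi, rfl⟩
    obtain ⟨j, hj, hji⟩ := ρ.σ_e_mem_image_e hIpos (by simpa using hJpos) hIJ hi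
    exact ⟨ρ.e j, ⟨j, hj, rfl⟩, by rw [hji, σ_apply_σ_inv]⟩

theorem image_simple_eq_of_image_σ_e_eq {w : W} {I J : Set B}
    (h : ρ.σ w '' (ρ.e '' J) = ρ.e '' I) :
    cs.simple '' I = (fun x => w * x * w⁻¹) '' (cs.simple '' J) := by
  ext x
  constructor
  · rintro ⟨i, hi, rfl⟩
    obtain ⟨_, ⟨j, hj, rfl⟩, hji⟩ : ρ.e i ∈ ρ.σ w '' (ρ.e '' J) := h ▸ ⟨i, hi, rfl⟩
    exact ⟨cs.simple j, ⟨j, hj, rfl⟩, ρ.conj_simple_eq_of_σ_e_eq hji⟩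
  · rintro ⟨_, ⟨j, hj, rfl⟩, rfl⟩
    obtain ⟨i, hi, hij⟩ : ρ.σ w (ρ.e j) ∈ ρ.e '' I := h ▸ ⟨_, ⟨j, hj, rfl⟩, rfl⟩
    exact ⟨i, hi, (ρ.conj_simple_eq_of_σ_e_eq hij.symm).symm⟩

end CoxPaper.GeomRep

open CoxPaper in
theorem stmt_7_general {B W : Type*} [Group W] {M : CoxeterMatrix B}
    (cs : CoxeterSystem M W) {V : Type*} [AddCommGroup V] [Module ℝ V]
    (ρ : GeomRep cs V) (I J : Finset B) (w : W)
    (h : stdParabolic cs ↑I = (stdParabolic cs ↑J).map (MulAut.conj w).toMonoidHom) :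
    I.card = J.card ∧ ∃ u ∈ stdParabolic cs (↑J : Set B),
      (ρ.σ (w * u)) '' (ρ.e '' ↑J) = ρ.e '' ↑I ∧
      cs.simple '' ↑I = (fun x => (w * u) * x * (w * u)⁻¹) '' (cs.simple '' ↑J) := by
  set PJ := stdParabolic cs (↑J : Set B)
  obtain ⟨u, hu, hmin⟩ := (measure fun y => cs.length (w * y)).wf.has_min PJ ⟨1, PJ.one_mem⟩
  have hconj : ∀ x, x ∈ stdParabolic cs I ↔ (w * u)⁻¹ * x * (w * u) ∈ PJ := fun x => by
    rw [h, Subgroup.mem_map_equiv, MulAut.conj_symm_apply,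
      show (w * u)⁻¹ * x * (w * u) = u⁻¹ * (w⁻¹ * x * w) * u by group,
      Subgroup.mul_mem_cancel_right _ hu, Subgroup.mul_mem_cancel_left _ (inv_mem hu)]
  have hroots := ρ.image_σ_e_eq_of_minimal hconj fun y hy =>
    by simpa only [mul_assoc] using not_lt.mp (hmin (u * y) (PJ.mul_mem hu hy))
  refine ⟨?_, u, hu, hroots, ρ.image_simple_eq_of_image_σ_e_eq hroots⟩
  have hσinj : Function.Injective (ρ.σ (w * u)) :=
    Function.LeftInverse.injective (ρ.σ_inv_apply_σ (w * u))
  have hcard := congrArg Set.ncard hroots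
  rwa [Set.ncard_image_of_injective _ hσinj, Set.ncard_image_of_injective _ ρ.e.injective,
    Set.ncard_image_of_injective _ ρ.e.injective, Set.ncard_coe_finset, Set.ncard_coe_finset,
    eq_comm] at hcard

open CoxPaper in
/-- If `W_I = w W_J w⁻¹` then `|I| = |J|` and some `w₀ ∈ w W_J` maps `Δ_J` onto `Δ_I`
and conjugates the simple reflections of `J` onto those of `I`. -/
theorem stmt_7 {B W : Type*} [Fintype B] [Group W] {M : CoxeterMatrix B}
    (cs : CoxeterSystem M W) {V : Type*} [AddCommGroup V] [Module ℝ V]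
    (ρ : GeomRep cs V) (I J : Finset B) (w : W)
    (h : stdParabolic cs ↑I = (stdParabolic cs ↑J).map (MulAut.conj w).toMonoidHom) :
    I.card = J.card ∧ ∃ u ∈ stdParabolic cs (↑J : Set B),
      (ρ.σ (w * u)) '' (ρ.e '' ↑J) = ρ.e '' ↑I ∧
      cs.simple '' ↑I = (fun x => (w * u) * x * (w * u)⁻¹) '' (cs.simple '' ↑J) :=
  stmt_7_general cs ρ I J w h
end

section
/- Let (W,S) be a Coxeter system with S = {s_1,…,s_n}, and let w be the element s_n s_{n−1}⋯s_{j+1} s_{j−1}⋯s_1 (the product of all simple generators except s_j, in decreasing order of index). Then the reflection length of w equals its Coxeter length equals n−1: ℓ_T(w) = ℓ(w) = n−1. -/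
open List

/-!
`W` acts on `V = ℝ^S × ℝ^S` (the representation `doubledRep`, written `ρ` below) through the
pseudo-reflections `σᵢ z = z - fᵢ(z) eᵢ`, where `fᵢ = coroot i` pairs the first component with the
Tits form and adds the `i`-th coordinate of the second component; the second component makes the
`fᵢ` linearly independent even when the Tits form is degenerate. On the plane spanned by `eᵢ, eₖ`
the product `σᵢσₖ` has determinant `1` and trace `2 cos (2π / m_{ik})`, so it has order `m_{ik}`,
and it fixes the common kernel of `fᵢ` and `fₖ`, a complement of that plane.

A reflection `x sᵢ x⁻¹` acts as the identity plus a rank-one map, so `ℓ_T(w) ≥ rank (ρ(w) - 1)`.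
If `w` is a product of distinct simple generators `s_a`, `a ∈ ω`, a vector fixed by `ρ(w)` is killed
by every `f_a`, `a ∈ ω`, because `σ_a` is the only factor moving the `a`-th coordinate of the first
component. Hence `rank (ρ(w) - 1) ≥ |ω|`, and together with `ℓ_T ≤ ℓ ≤ |ω|` this gives
`ℓ_T(w) = ℓ(w) = |ω|`.
-/

open Module Real

namespace Module.End

section Real

variable {V : Type*} [AddCommGroup V] [Module ℝ V]

theorem sin_smul_pow_succ_apply {T : Module.End ℝ V} {θ : ℝ} {z : V}
    (hz : T (T z) = (2 * cos θ) • T z - z) (p : ℕ) :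
    sin θ • (T ^ (p + 1)) z = sin ((p + 1) * θ) • T z - sin (p * θ) • z := by
  induction p with
  | zero => simp
  | succ p ih =>
    have hsin : sin ((p + 1 + 1) * θ) = 2 * cos θ * sin ((p + 1) * θ) - sin (p * θ) := by
      rw [show (p + 1 + 1) * θ = (p + 1) * θ + θ by ring,
        show p * θ = (p + 1) * θ - θ by ring, sin_add, sin_sub]
      ring
    rw [pow_succ', Module.End.mul_apply, ← map_smul, ih, map_sub, map_smul, map_smul, hz,
      Nat.cast_succ, hsin]
    module

theorem pow_apply_eq_self_of_apply_apply_eq {T : Module.End ℝ V} {m : ℕ} (hm : 3 ≤ m) {z : V}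
    (hz : T (T z) = (2 * cos (2 * π / m)) • T z - z) : (T ^ m) z = z := by
  set θ := 2 * π / m
  have hθ : 0 < θ ∧ θ < π := by
    have : (3 : ℝ) ≤ m := by exact_mod_cast hm
    refine ⟨by positivity, (div_lt_iff₀ (by positivity)).2 (by nlinarith [pi_pos])⟩
  have hmθ : (m : ℝ) * θ = 2 * π := by
    simp only [θ]
    field_simp
  have key := sin_smul_pow_succ_apply hz (m - 1)
  rw [Nat.sub_add_cancel (by omega : 1 ≤ m), Nat.cast_sub (by omega : 1 ≤ m), Nat.cast_one,
    sub_add_cancel, hmθ, sub_mul, one_mul, hmθ, sin_sub, sin_two_pi, cos_two_pi] at key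
  refine smul_right_injective V (sin_pos_of_pos_of_lt_pi hθ.1 hθ.2).ne' ?_
  simpa using key

end Real

section Field

variable {K V : Type*} [Field K] [AddCommGroup V] [Module K V] [FiniteDimensional K V]

theorem finrank_range_mul_sub_one_le (f g : Module.End K V) :
    finrank K (f * g - 1).range ≤ finrank K (f - 1).range + finrank K (g - 1).range := by
  refine (Submodule.finrank_mono ?_).trans (Submodule.finrank_add_le_finrank_add_finrank _ _)
  rintro _ ⟨z, rfl⟩
  have hz : (f * g - 1) z = (f - 1) (g z) + (g - 1) z := by simp
  rw [hz]
  exact Submodule.add_mem_sup ⟨_, rfl⟩ ⟨_, rfl⟩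

theorem finrank_range_list_prod_sub_one_le (l : List (Module.End K V)) :
    finrank K (l.prod - 1).range ≤ (l.map fun f => finrank K (f - 1).range).sum := by
  induction l with
  | nil => rw [List.prod_nil, sub_self, LinearMap.range_zero, finrank_bot]; rfl
  | cons f l ih =>
    rw [List.prod_cons, List.map_cons, List.sum_cons]
    exact (finrank_range_mul_sub_one_le f l.prod).trans (by omega)

end Field

end Module.End

namespace CoxeterMatrix

variable {B : Type*} (M : CoxeterMatrix B)

noncomputable def cartan (i k : B) : ℝ :=
  if M i k = 0 then 0 else -2 * cos (π / M i k)

theorem cartan_self (i : B) : M.cartan i i = 2 := by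
  simp [cartan]

theorem cartan_comm (i k : B) : M.cartan i k = M.cartan k i := by
  simp [cartan, M.symmetric i k]

theorem cartan_sq_lt_four {i k : B} (hik : i ≠ k) (h0 : M i k ≠ 0) : M.cartan i k ^ 2 < 4 := by
  have h2 : (2 : ℝ) ≤ M i k := by
    have := M.off_diagonal i k hik
    exact_mod_cast (by omega : 2 ≤ M i k)
  have hpos : 0 < π / M i k := by positivity
  have hlt : π / M i k < π := by
    rw [div_lt_iff₀ (by linarith)]
    nlinarith [pi_pos]
  have hsin := sin_pos_of_pos_of_lt_pi hpos hlt
  simp only [cartan, h0, if_false]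
  nlinarith [sin_sq_add_cos_sq (π / M i k)]

variable [Fintype B]

noncomputable def coroot (i : B) : (B → ℝ) × (B → ℝ) →ₗ[ℝ] ℝ :=
  (∑ k, M.cartan i k • LinearMap.proj k).coprod (LinearMap.proj i)

theorem coroot_apply (i : B) (z : (B → ℝ) × (B → ℝ)) :
    M.coroot i z = ∑ k, M.cartan i k * z.1 k + z.2 i := by
  simp [coroot]

variable [DecidableEq B]

omit [Fintype B] in
def simpleRoot (i : B) : (B → ℝ) × (B → ℝ) := (Pi.single i 1, 0)

theorem coroot_simpleRoot (i k : B) : M.coroot i (simpleRoot k) = M.cartan i k := by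
  simp [coroot_apply, simpleRoot, Pi.single_apply]

noncomputable def simpleRefl (i : B) : Module.End ℝ ((B → ℝ) × (B → ℝ)) :=
  LinearMap.id - (M.coroot i).smulRight (simpleRoot i)

theorem simpleRefl_apply (i : B) (z : (B → ℝ) × (B → ℝ)) :
    M.simpleRefl i z = z - M.coroot i z • simpleRoot i := rfl

theorem simpleRefl_simpleRoot (i k : B) :
    M.simpleRefl i (simpleRoot k) = simpleRoot k - M.cartan i k • simpleRoot i := by
  rw [simpleRefl_apply, coroot_simpleRoot]

theorem simpleRefl_simpleRoot_self (i : B) : M.simpleRefl i (simpleRoot i) = -simpleRoot i := by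
  rw [simpleRefl_simpleRoot, cartan_self]
  module

theorem simpleRefl_apply_of_coroot_eq_zero {i : B} {z : (B → ℝ) × (B → ℝ)}
    (h : M.coroot i z = 0) : M.simpleRefl i z = z := by
  rw [simpleRefl_apply, h, zero_smul, sub_zero]

theorem simpleRefl_mul_self (i : B) : M.simpleRefl i * M.simpleRefl i = 1 := by
  refine LinearMap.ext fun z => ?_
  simp only [Module.End.mul_apply, simpleRefl_apply, map_sub, map_smul, coroot_simpleRoot,
    cartan_self, Module.End.one_apply]
  module

theorem exists_eq_add_simpleRoot_add_of_coroot_eq_zero {i k : B} (h : M.cartan i k ^ 2 ≠ 4)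
    (z : (B → ℝ) × (B → ℝ)) :
    ∃ (α β : ℝ) (y : (B → ℝ) × (B → ℝ)), M.coroot i y = 0 ∧ M.coroot k y = 0 ∧
      z = α • simpleRoot i + β • simpleRoot k + y := by
  have hΔ : 4 - M.cartan i k ^ 2 ≠ 0 := sub_ne_zero.2 (Ne.symm h)
  set α := (2 * M.coroot i z - M.cartan i k * M.coroot k z) / (4 - M.cartan i k ^ 2)
  set β := (2 * M.coroot k z - M.cartan i k * M.coroot i z) / (4 - M.cartan i k ^ 2)
  refine ⟨α, β, z - α • simpleRoot i - β • simpleRoot k, ?_, ?_, by module⟩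
  all_goals
    simp only [map_sub, map_smul, coroot_simpleRoot, cartan_self, M.cartan_comm k i, smul_eq_mul,
      α, β]
    field_simp
    ring

theorem simpleRefl_mul_pow_apply_simpleRoot {i k : B} (hik : i ≠ k) (h0 : M i k ≠ 0)
    {z : (B → ℝ) × (B → ℝ)} (hz : z = simpleRoot i ∨ z = simpleRoot k) :
    ((M.simpleRefl i * M.simpleRefl k) ^ M i k) z = z := by
  set T := M.simpleRefl i * M.simpleRefl k
  set a := M.cartan i k
  have hTi : T (simpleRoot i) = (a ^ 2 - 1) • simpleRoot i - a • simpleRoot k := by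
    simp only [T, Module.End.mul_apply, simpleRefl_simpleRoot, M.cartan_comm k i, map_sub,
      map_smul, cartan_self, a]
    module
  have hTk : T (simpleRoot k) = a • simpleRoot i - simpleRoot k := by
    simp only [T, Module.End.mul_apply, simpleRefl_simpleRoot_self, map_neg,
      simpleRefl_simpleRoot, a]
    module
  obtain hm | hm : M i k = 2 ∨ 3 ≤ M i k := by
    have := M.off_diagonal i k hik
    omega
  · have ha : a = 0 := by simp [a, cartan, hm, cos_pi_div_two]
    have hneg : T z = -z := by
      rcases hz with rfl | rfl
      · rw [hTi, ha]; module
      · rw [hTk, ha]; module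
    rw [hm, pow_two, Module.End.mul_apply, hneg, map_neg, hneg, neg_neg]
  · -- the trace of `T` on the plane of `e_i, e_k` is `a ^ 2 - 2 = 2 cos (2π / m)`
    have hτ : 2 * cos (2 * π / M i k) = a ^ 2 - 2 := by
      rw [mul_div_assoc, cos_two_mul]
      simp only [a, cartan, h0, if_false]
      ring
    refine Module.End.pow_apply_eq_self_of_apply_apply_eq hm ?_
    rw [hτ]
    rcases hz with rfl | rfl
    · rw [hTi, map_sub, map_smul, map_smul, hTi, hTk]; module
    · rw [hTk, map_sub, map_smul, hTi, hTk]; module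

theorem isLiftable_simpleRefl : M.IsLiftable M.simpleRefl := by
  intro i k
  rcases eq_or_ne i k with rfl | hik
  · rw [M.diagonal, pow_one, simpleRefl_mul_self]
  rcases eq_or_ne (M i k) 0 with h0 | h0
  · rw [h0, pow_zero]
  refine LinearMap.ext fun z => ?_
  obtain ⟨α, β, y, hyi, hyk, rfl⟩ :=
    M.exists_eq_add_simpleRoot_add_of_coroot_eq_zero (M.cartan_sq_lt_four hik h0).ne z
  have hy : (M.simpleRefl i * M.simpleRefl k) y = y := by
    rw [Module.End.mul_apply, simpleRefl_apply_of_coroot_eq_zero M hyk,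
      simpleRefl_apply_of_coroot_eq_zero M hyi]
  rw [map_add, map_add, map_smul, map_smul, M.simpleRefl_mul_pow_apply_simpleRoot hik h0 (.inl rfl),
    M.simpleRefl_mul_pow_apply_simpleRoot hik h0 (.inr rfl), Module.End.pow_apply,
    Function.IsFixedPt.iterate hy, Module.End.one_apply]

end CoxeterMatrix

namespace CoxeterSystem

variable {B W : Type*} [Group W] [Fintype B] [DecidableEq B] {M : CoxeterMatrix B}
  (cs : CoxeterSystem M W)

noncomputable def doubledRep : W →* Module.End ℝ ((B → ℝ) × (B → ℝ)) :=
  cs.lift ⟨M.simpleRefl, M.isLiftable_simpleRefl⟩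

@[simp]
theorem doubledRep_simple (i : B) : cs.doubledRep (cs.simple i) = M.simpleRefl i :=
  cs.lift_apply_simple M.isLiftable_simpleRefl i

theorem finrank_range_doubledRep_sub_one_le_one {t : W} (ht : cs.IsReflection t) :
    finrank ℝ (cs.doubledRep t - 1).range ≤ 1 := by
  obtain ⟨x, i, rfl⟩ := ht
  have hx : ∀ z, cs.doubledRep x (cs.doubledRep x⁻¹ z) = z := fun z => by
    rw [← Module.End.mul_apply, ← map_mul, mul_inv_cancel, map_one, Module.End.one_apply]
  have hrange : (cs.doubledRep (x * cs.simple i * x⁻¹) - 1).range ≤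
      ℝ ∙ cs.doubledRep x (CoxeterMatrix.simpleRoot i) := by
    rintro _ ⟨z, rfl⟩
    refine Submodule.mem_span_singleton.2 ⟨-M.coroot i (cs.doubledRep x⁻¹ z), ?_⟩
    simp only [map_mul, LinearMap.sub_apply, Module.End.mul_apply, doubledRep_simple,
      CoxeterMatrix.simpleRefl_apply, map_sub, map_smul, hx, Module.End.one_apply]
    module
  refine (Submodule.finrank_mono hrange).trans ?_
  simpa using finrank_span_le_card {cs.doubledRep x (CoxeterMatrix.simpleRoot i)}

theorem finrank_range_doubledRep_list_prod_sub_one_le {l : List W}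
    (hl : ∀ t ∈ l, cs.IsReflection t) : finrank ℝ (cs.doubledRep l.prod - 1).range ≤ l.length := by
  rw [map_list_prod]
  refine (Module.End.finrank_range_list_prod_sub_one_le _).trans ?_
  rw [List.map_map]
  refine (List.sum_le_card_nsmul _ 1 ?_).trans (by simp)
  simpa using fun t ht => cs.finrank_range_doubledRep_sub_one_le_one (hl t ht)

theorem doubledRep_wordProd_apply_fst_of_notMem {ω : List B} {b : B} (hb : b ∉ ω)
    (z : (B → ℝ) × (B → ℝ)) : (cs.doubledRep (cs.wordProd ω) z).1 b = z.1 b := by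
  induction ω with
  | nil => simp
  | cons a ω ih =>
    rw [List.mem_cons, not_or] at hb
    simp [wordProd_cons, CoxeterMatrix.simpleRefl_apply, CoxeterMatrix.simpleRoot, hb.1, ih hb.2]

theorem coroot_eq_zero_of_doubledRep_wordProd_apply_eq_self {ω : List B} (hω : ω.Nodup)
    {z : (B → ℝ) × (B → ℝ)} (hz : cs.doubledRep (cs.wordProd ω) z = z) {a : B} (ha : a ∈ ω) :
    M.coroot a z = 0 := by
  induction ω with
  | nil => cases ha
  | cons b ω ih =>
    obtain ⟨hbω, hω⟩ := List.nodup_cons.1 hω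
    rw [wordProd_cons, map_mul, Module.End.mul_apply, doubledRep_simple] at hz
    set y := cs.doubledRep (cs.wordProd ω) z
    -- only the factor `s_b` moves the `b`-th coordinate, and it moves it by `-coroot b`
    have hyb : M.coroot b y = 0 := by
      have hb := congrArg (fun v => v.1 b) hz
      simp only [CoxeterMatrix.simpleRefl_apply, Prod.fst_sub, Prod.smul_fst, Pi.sub_apply,
        Pi.smul_apply, CoxeterMatrix.simpleRoot, Pi.single_eq_same, smul_eq_mul, mul_one, y,
        cs.doubledRep_wordProd_apply_fst_of_notMem hbω] at hb
      linarith
    have hyz : y = z := by rwa [CoxeterMatrix.simpleRefl_apply_of_coroot_eq_zero _ hyb] at hz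
    rcases List.mem_cons.1 ha with rfl | ha
    · rwa [← hyz]
    · exact ih hω hyz ha

theorem length_le_finrank_range_doubledRep_wordProd_sub_one {ω : List B} (hω : ω.Nodup) :
    ω.length ≤ finrank ℝ (cs.doubledRep (cs.wordProd ω) - 1).range := by
  set E := cs.doubledRep (cs.wordProd ω) - 1
  let g : (B → ℝ) × (B → ℝ) →ₗ[ℝ] (B → ℝ) × ({b // b ∉ ω} → ℝ) :=
    LinearMap.prodMap LinearMap.id (LinearMap.funLeft ℝ ℝ Subtype.val)
  have hinj : Function.Injective (g ∘ₗ E.ker.subtype) := by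
    rw [← LinearMap.ker_eq_bot, LinearMap.ker_eq_bot']
    rintro ⟨z, hz⟩ hgz
    rw [LinearMap.mem_ker, LinearMap.sub_apply, Module.End.one_apply, sub_eq_zero] at hz
    have h1 : z.1 = 0 := congrArg Prod.fst hgz
    have h2 : ∀ b, z.2 b = 0 := fun b => by
      by_cases hb : b ∈ ω
      · simpa [CoxeterMatrix.coroot_apply, h1] using
          cs.coroot_eq_zero_of_doubledRep_wordProd_apply_eq_self hω hz hb
      · exact congrFun (congrArg Prod.snd hgz) ⟨b, hb⟩
    exact Subtype.ext (Prod.ext h1 (funext h2))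
  have hcard : Fintype.card {b // b ∉ ω} = Fintype.card B - ω.length := by
    rw [Fintype.card_subtype_compl, Fintype.card_subtype, ← List.toFinset_card_of_nodup hω]
    congr 2
    ext
    simp
  have hker := LinearMap.finrank_le_finrank_of_injective hinj
  have hrank := E.finrank_range_add_finrank_ker
  have hlen : ω.length ≤ Fintype.card B := hω.length_le_card
  simp only [finrank_prod, finrank_fintype_fun_eq_card, hcard] at hker hrank
  omega

end CoxeterSystem

namespace CoxPaper

variable {B W : Type*} [Group W] {M : CoxeterMatrix B} (cs : CoxeterSystem M W)

theorem reflLength_list_prod_le {l : List W} (hl : ∀ t ∈ l, cs.IsReflection t) :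
    reflLength cs l.prod ≤ l.length :=
  Nat.sInf_le ⟨l, rfl, hl, rfl⟩

theorem exists_reflection_factorization_of_length (w : W) :
    ∃ l : List W, (∀ t ∈ l, cs.IsReflection t) ∧ l.prod = w ∧ l.length = cs.length w := by
  obtain ⟨ω, hω, rfl⟩ := cs.exists_isReduced w
  exact ⟨ω.map cs.simple, by simp [cs.isReflection_simple], rfl, by rw [List.length_map, hω.eq]⟩

theorem reflLength_le_length (w : W) : reflLength cs w ≤ cs.length w := by
  obtain ⟨l, hl, rfl, hlen⟩ := exists_reflection_factorization_of_length cs w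
  exact hlen ▸ reflLength_list_prod_le cs hl

theorem exists_isReducedReflFactorization (w : W) : ∃ l, IsReducedReflFactorization cs w l := by
  obtain ⟨l, hl, hprod, -⟩ := exists_reflection_factorization_of_length cs w
  obtain ⟨l, hlen, hl, hprod⟩ : reflLength cs w ∈ {k | ∃ l : List W, l.length = k ∧
      (∀ t ∈ l, t ∈ {t | cs.IsReflection t}) ∧ l.prod = w} :=
    Nat.sInf_mem ⟨l.length, l, rfl, hl, hprod⟩
  exact ⟨l, hl, hprod, hlen⟩

variable [Fintype B]

theorem length_le_reflLength_wordProd {ω : List B} (hω : ω.Nodup) :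
    ω.length ≤ reflLength cs (cs.wordProd ω) := by
  classical
  obtain ⟨l, hl, hprod, hlen⟩ := exists_isReducedReflFactorization cs (cs.wordProd ω)
  calc ω.length ≤ finrank ℝ (cs.doubledRep (cs.wordProd ω) - 1).range :=
        cs.length_le_finrank_range_doubledRep_wordProd_sub_one hω
    _ ≤ l.length := hprod ▸ cs.finrank_range_doubledRep_list_prod_sub_one_le hl
    _ = reflLength cs (cs.wordProd ω) := hlen

theorem reflLength_wordProd_of_nodup {ω : List B} (hω : ω.Nodup) :
    reflLength cs (cs.wordProd ω) = ω.length :=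
  ((reflLength_le_length cs _).trans (cs.length_wordProd_le ω)).antisymm
    (length_le_reflLength_wordProd cs hω)

theorem length_wordProd_of_nodup {ω : List B} (hω : ω.Nodup) :
    cs.length (cs.wordProd ω) = ω.length :=
  (cs.length_wordProd_le ω).antisymm
    ((length_le_reflLength_wordProd cs hω).trans (reflLength_le_length cs _))

end CoxPaper

open CoxPaper in
/-- For `w = s_n s_{n-1} ⋯ s_{j+1} s_{j-1} ⋯ s_1` (all simple generators except `s_j`, in
decreasing order), `ℓ_T(w) = ℓ(w) = n - 1`. -/
theorem stmt_13 {n : ℕ} {W : Type*} [Group W] {M : CoxeterMatrix (Fin n)}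
    (cs : CoxeterSystem M W) (j : Fin n) :
    reflLength cs (cs.wordProd (((List.finRange n).filter (fun i => i ≠ j)).reverse)) = n - 1 ∧
    cs.length (cs.wordProd (((List.finRange n).filter (fun i => i ≠ j)).reverse)) = n - 1 := by
  set ω := ((List.finRange n).filter (fun i => i ≠ j)).reverse
  have hω : ω.Nodup := List.nodup_reverse.2 ((List.nodup_finRange n).filter _)
  have hlen : ω.length = n - 1 := by
    rw [← List.toFinset_card_of_nodup hω]
    simp [ω, List.toFinset_reverse, List.toFinset_filter, Finset.filter_ne']
  rw [← hlen]
  exact ⟨reflLength_wordProd_of_nodup cs hω, length_wordProd_of_nodup cs hω⟩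
end

section
/- In the Coxeter group W of type affine D̃_4 with simple generators s_1,…,s_5 (s_3 adjacent to each of s_1, s_2, s_4, s_5, all edge labels 3), the element v = s_4 s_3 s_4 s_5 s_3 s_2 of the parabolic subgroup W' = ⟨s_2, s_3, s_4, s_5⟩ (of type D_4) satisfies: s_5 s_4 commutes with v, but s_5 s_4 does not lie in the cyclic group ⟨v⟩. -/
open List

namespace CoxPaper

/-- The Coxeter matrix of type `D̃₄`: the central node is `2`; the nodes `0, 1, 3, 4` are
each joined to `2` with label `3`, and all other pairs commute. -/
def D4affMatrix : CoxeterMatrix (Fin 5) where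
  M := Matrix.of fun i j => if i = j then 1 else if i = 2 ∨ j = 2 then 3 else 2
  isSymm := by decide
  diagonal := by decide
  off_diagonal := by simp only [Matrix.of_apply]; decide

end CoxPaper

/-!
Both `s₅s₄ · v` and `v · s₅s₄` reduce by braid moves and cancellations to the word
`s₃ s₅ s₄ s₃ s₄ s₂`. For non-membership, pass to the finite Weyl group `W(D₄)`, realized as signed
permutations of `e₁, …, e₄`: there the image of `v` satisfies `v̄⁴ = 1`, and the image of `s₅s₄`
is none of `1, v̄, v̄², v̄³`.
-/

namespace CoxeterSystem

variable {B W : Type*} [Group W] {M : CoxeterMatrix B} (cs : CoxeterSystem M W)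

theorem simple_mul_simple_comm_of_eq_two {i j : B} (h : M i j = 2) :
    cs.simple i * cs.simple j = cs.simple j * cs.simple i := by
  simpa [braidWord, alternatingWord, h, M.symmetric j i, wordProd] using
    cs.wordProd_braidWord_eq i j

theorem simple_braid_of_eq_three {i j : B} (h : M i j = 3) :
    cs.simple i * cs.simple j * cs.simple i = cs.simple j * cs.simple i * cs.simple j := by
  simpa [braidWord, alternatingWord, h, M.symmetric j i, wordProd, mul_assoc] using
    cs.wordProd_braidWord_eq j i

theorem wordProd_append_cons_cons_self (l r : List B) (i : B) :
    cs.wordProd (l ++ i :: i :: r) = cs.wordProd (l ++ r) := by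
  simp only [wordProd_append, wordProd_cons, simple_mul_simple_cancel_left]

theorem wordProd_append_swap_of_eq_two {i j : B} (h : M i j = 2) (l r : List B) :
    cs.wordProd (l ++ i :: j :: r) = cs.wordProd (l ++ j :: i :: r) := by
  simp only [wordProd_append, wordProd_cons, ← mul_assoc, cs.simple_mul_simple_comm_of_eq_two h]

theorem wordProd_append_braid_of_eq_three {i j : B} (h : M i j = 3) (l r : List B) :
    cs.wordProd (l ++ i :: j :: i :: r) = cs.wordProd (l ++ j :: i :: j :: r) := by
  simp only [wordProd_append, wordProd_cons, ← mul_assoc, cs.simple_braid_of_eq_three h]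

theorem lift_wordProd {G : Type*} [Monoid G] {f : B → G} (hf : M.IsLiftable f) (l : List B) :
    cs.lift ⟨f, hf⟩ (cs.wordProd l) = (l.map f).prod := by
  simp only [wordProd, map_list_prod, List.map_map]
  congr 1
  exact List.map_congr_left fun i _ ↦ cs.lift_apply_simple hf i

end CoxeterSystem

theorem exists_pow_eq_of_mem_zpowers {G : Type*} [Group G] {x y : G} {n : ℕ} (hn : n ≠ 0)
    (hx : x ^ n = 1) (hy : y ∈ Subgroup.zpowers x) : ∃ k < n, x ^ k = y := by
  obtain ⟨m, rfl⟩ := Subgroup.mem_zpowers_iff.mp hy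
  have hmod : 0 ≤ m % n := Int.emod_nonneg m (by exact_mod_cast hn)
  have hlt : m % n < n := Int.emod_lt_of_pos m (by omega)
  refine ⟨(m % n).toNat, by omega, ?_⟩
  rw [← zpow_natCast, Int.toNat_of_nonneg hmod, ← zpow_eq_zpow_emod' m hx]

namespace CoxPaper

open CoxeterSystem

/-- Index `k < 4` stands for `e_{k+1}` and `k + 4` for `-e_{k+1}`. The generators act as the
reflections in `e₁ - e₂`, `e₁ + e₂`, `e₂ - e₃`, `e₃ - e₄`, `e₃ + e₄`, with `e₁ + e₂` the highest
root of `D₄`: this is the quotient of `D̃₄` onto its finite Weyl group `W(D₄)`. -/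
def d4SignedPerm : Fin 5 → Equiv.Perm (Fin 8)
  | 0 => Equiv.swap 0 1 * Equiv.swap 4 5
  | 1 => Equiv.swap 0 5 * Equiv.swap 1 4
  | 2 => Equiv.swap 1 2 * Equiv.swap 5 6
  | 3 => Equiv.swap 2 3 * Equiv.swap 6 7
  | 4 => Equiv.swap 2 7 * Equiv.swap 3 6

theorem isLiftable_d4SignedPerm : D4affMatrix.IsLiftable d4SignedPerm := by
  unfold CoxeterMatrix.IsLiftable
  decide

variable {W : Type*} [Group W] (cs : CoxeterSystem D4affMatrix W)

theorem wordProd_43_mul_comm :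
    cs.wordProd [4, 3] * cs.wordProd [3, 2, 3, 4, 2, 1] =
      cs.wordProd [3, 2, 3, 4, 2, 1] * cs.wordProd [4, 3] := by
  rw [← wordProd_append, ← wordProd_append]
  calc cs.wordProd [4, 3, 3, 2, 3, 4, 2, 1]
      = cs.wordProd [4, 2, 3, 4, 2, 1] := cs.wordProd_append_cons_cons_self [4] [2, 3, 4, 2, 1] 3
    _ = cs.wordProd [4, 2, 4, 3, 2, 1] := cs.wordProd_append_swap_of_eq_two rfl [4, 2] [2, 1]
    _ = cs.wordProd [2, 4, 2, 3, 2, 1] := cs.wordProd_append_braid_of_eq_three rfl [] [3, 2, 1]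
    _ = cs.wordProd [2, 4, 3, 2, 3, 1] :=
      (cs.wordProd_append_braid_of_eq_three rfl [2, 4] [1]).symm
    _ = cs.wordProd [2, 3, 4, 2, 3, 1] := cs.wordProd_append_swap_of_eq_two rfl [2] [2, 3, 1]
    _ = cs.wordProd [2, 3, 2, 2, 4, 2, 3, 1] :=
      (cs.wordProd_append_cons_cons_self [2, 3] [4, 2, 3, 1] 2).symm
    _ = cs.wordProd [3, 2, 3, 2, 4, 2, 3, 1] :=
      cs.wordProd_append_braid_of_eq_three rfl [] [2, 4, 2, 3, 1]
    _ = cs.wordProd [3, 2, 3, 4, 2, 4, 3, 1] :=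
      (cs.wordProd_append_braid_of_eq_three rfl [3, 2, 3] [3, 1]).symm
    _ = cs.wordProd [3, 2, 3, 4, 2, 4, 1, 3] :=
      cs.wordProd_append_swap_of_eq_two rfl [3, 2, 3, 4, 2, 4] []
    _ = cs.wordProd [3, 2, 3, 4, 2, 1, 4, 3] :=
      cs.wordProd_append_swap_of_eq_two rfl [3, 2, 3, 4, 2] [3]

set_option maxRecDepth 10000 in
theorem wordProd_43_notMem_zpowers :
    cs.wordProd [4, 3] ∉ Subgroup.zpowers (cs.wordProd [3, 2, 3, 4, 2, 1]) := by
  intro hmem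
  let f := cs.lift ⟨d4SignedPerm, isLiftable_d4SignedPerm⟩
  have hf : f (cs.wordProd [4, 3]) ∈ Subgroup.zpowers (f (cs.wordProd [3, 2, 3, 4, 2, 1])) := by
    rw [← MonoidHom.map_zpowers]
    exact Subgroup.mem_map_of_mem f hmem
  simp only [f, lift_wordProd] at hf
  obtain ⟨k, hk, hpow⟩ := exists_pow_eq_of_mem_zpowers (n := 4) (by norm_num) (by decide) hf
  revert k
  decide

end CoxPaper

open CoxPaper in
/-- In the Coxeter group of type `D̃₄` (generators `s_1, …, s_5` indexed here by
`0, …, 4`, center `s_3 = 2`), the element `v = s_4 s_3 s_4 s_5 s_3 s_2` commutes with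
`s_5 s_4`, but `s_5 s_4 ∉ ⟨v⟩`. -/
theorem stmt_19 {W : Type*} [Group W] (cs : CoxeterSystem D4affMatrix W) :
    (cs.wordProd [4, 3]) * (cs.wordProd [3, 2, 3, 4, 2, 1]) =
      (cs.wordProd [3, 2, 3, 4, 2, 1]) * (cs.wordProd [4, 3]) ∧
    cs.wordProd [4, 3] ∉ Subgroup.zpowers (cs.wordProd [3, 2, 3, 4, 2, 1]) :=
  ⟨wordProd_43_mul_comm cs, wordProd_43_notMem_zpowers cs⟩
end
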